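/- arXiv:0805.3432 — 3 statements merged into one kernel-verified Lean document; each statement's English description precedes it below -/
import Mathlib

section
/- Let H be a bialgebra and let M, N be objects of LR(H), i.e., H-bimodules and H-bicomodules satisfying the left-left Yetter-Drinfeld, left-right Long, right-right Yetter-Drinfeld, and right-left Long compatibility conditions. Then M ⊗ N with diagonal actions h·(m⊗n) = h₁·m ⊗ h₂·n, (m⊗n)·h = m·h₁ ⊗ n·h₂, and codiagonal coactions (m⊗n)^{(-1)} ⊗ (m⊗n)^{(0)} = m^{(-1)}n^{(-1)} ⊗ (m^{(0)} ⊗ n^{(0)}) and (m⊗n)^{<0>} ⊗ (m⊗n)^{<1>} = (m^{<0>} ⊗ n^{<0>}) ⊗ m^{<1>}n^{<1>}, is again an object of LR(H). -/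
open TensorProduct
noncomputable section
namespace LRPaper
variable (k : Type*) [CommRing k]

def tt (A B C E : Type*) [AddCommGroup A] [Module k A] [AddCommGroup B] [Module k B]
    [AddCommGroup C] [Module k C] [AddCommGroup E] [Module k E] :
    (A ⊗[k] B) ⊗[k] (C ⊗[k] E) →ₗ[k] (A ⊗[k] C) ⊗[k] (B ⊗[k] E) :=
  (TensorProduct.tensorTensorTensorComm k A B C E).toLinearMap

def asl (A B C : Type*) [AddCommGroup A] [Module k A] [AddCommGroup B] [Module k B]
    [AddCommGroup C] [Module k C] :
    (A ⊗[k] B) ⊗[k] C →ₗ[k] A ⊗[k] (B ⊗[k] C) :=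
  (TensorProduct.assoc k A B C).toLinearMap

def asr (A B C : Type*) [AddCommGroup A] [Module k A] [AddCommGroup B] [Module k B]
    [AddCommGroup C] [Module k C] :
    A ⊗[k] (B ⊗[k] C) →ₗ[k] (A ⊗[k] B) ⊗[k] C :=
  (TensorProduct.assoc k A B C).symm.toLinearMap

def sw (A B : Type*) [AddCommGroup A] [Module k A] [AddCommGroup B] [Module k B] :
    A ⊗[k] B →ₗ[k] B ⊗[k] A :=
  (TensorProduct.comm k A B).toLinearMap


/-- `middle f` applies `f` to the two middle tensor factors. -/
def middle {A B C E B' C' : Type*} [AddCommGroup A] [Module k A] [AddCommGroup B] [Module k B]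
    [AddCommGroup C] [Module k C] [AddCommGroup E] [Module k E]
    [AddCommGroup B'] [Module k B'] [AddCommGroup C'] [Module k C']
    (f : B ⊗[k] C →ₗ[k] B' ⊗[k] C') :
    (A ⊗[k] B) ⊗[k] (C ⊗[k] E) →ₗ[k] (A ⊗[k] B') ⊗[k] (C' ⊗[k] E) :=
  asl k (A ⊗[k] B') C' E
    ∘ₗ TensorProduct.map
        (asr k A B' C' ∘ₗ TensorProduct.map LinearMap.id f ∘ₗ asl k A B C) LinearMap.id
    ∘ₗ asr k (A ⊗[k] B) C E

section Conditions
variable (H : Type*) [Ring H] [Bialgebra k H]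
variable {M N : Type*} [AddCommGroup M] [Module k M] [AddCommGroup N] [Module k N]

/-- counit of `H` -/
def εH : H →ₗ[k] k := Coalgebra.counit
/-- comultiplication of `H` -/
def δH : H →ₗ[k] H ⊗[k] H := Coalgebra.comul
/-- multiplication of `H` -/
def μH : H ⊗[k] H →ₗ[k] H := LinearMap.mul' k H

def IsLeftModule (aL : H ⊗[k] M →ₗ[k] M) : Prop :=
  (∀ m : M, aL (1 ⊗ₜ m) = m) ∧
  ∀ (h h' : H) (m : M), aL ((h * h') ⊗ₜ m) = aL (h ⊗ₜ aL (h' ⊗ₜ m))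

def IsRightModule (aR : M ⊗[k] H →ₗ[k] M) : Prop :=
  (∀ m : M, aR (m ⊗ₜ 1) = m) ∧
  ∀ (m : M) (h h' : H), aR (m ⊗ₜ (h * h')) = aR (aR (m ⊗ₜ h) ⊗ₜ h')

def IsBimodule (aL : H ⊗[k] M →ₗ[k] M) (aR : M ⊗[k] H →ₗ[k] M) : Prop :=
  IsLeftModule k H aL ∧ IsRightModule k H aR ∧
  ∀ (h : H) (m : M) (h' : H), aR (aL (h ⊗ₜ m) ⊗ₜ h') = aL (h ⊗ₜ aR (m ⊗ₜ h'))

def IsLeftComodule (cL : M →ₗ[k] H ⊗[k] M) : Prop :=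
  (∀ m : M, TensorProduct.lid k M (TensorProduct.map (εH k H) LinearMap.id (cL m)) = m) ∧
  ∀ m : M, TensorProduct.map LinearMap.id cL (cL m)
    = TensorProduct.assoc k H H M (TensorProduct.map (δH k H) LinearMap.id (cL m))

def IsRightComodule (cR : M →ₗ[k] M ⊗[k] H) : Prop :=
  (∀ m : M, TensorProduct.rid k M (TensorProduct.map LinearMap.id (εH k H) (cR m)) = m) ∧
  ∀ m : M, TensorProduct.map cR LinearMap.id (cR m)
    = (TensorProduct.assoc k M H H).symm (TensorProduct.map LinearMap.id (δH k H) (cR m))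

def IsBicomodule (cL : M →ₗ[k] H ⊗[k] M) (cR : M →ₗ[k] M ⊗[k] H) : Prop :=
  IsLeftComodule k H cL ∧ IsRightComodule k H cR ∧
  ∀ m : M, TensorProduct.map LinearMap.id cR (cL m)
    = TensorProduct.assoc k H M H (TensorProduct.map cL LinearMap.id (cR m))

/-- `(h₁⊗h₂)⊗m ↦ (h₁·m)⁽⁻¹⁾h₂ ⊗ (h₁·m)⁽⁰⁾` -/
def ydlL (aL : H ⊗[k] M →ₗ[k] M) (cL : M →ₗ[k] H ⊗[k] M) :
    (H ⊗[k] H) ⊗[k] M →ₗ[k] H ⊗[k] M :=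
  TensorProduct.map (μH k H ∘ₗ sw k H H) LinearMap.id
    ∘ₗ asr k H H M
    ∘ₗ TensorProduct.map LinearMap.id (cL ∘ₗ aL)
    ∘ₗ asl k H H M
    ∘ₗ TensorProduct.map (sw k H H) LinearMap.id

/-- `(h₁⊗h₂)⊗m ↦ h₁m⁽⁻¹⁾ ⊗ h₂·m⁽⁰⁾` -/
def ydlR (aL : H ⊗[k] M →ₗ[k] M) (cL : M →ₗ[k] H ⊗[k] M) :
    (H ⊗[k] H) ⊗[k] M →ₗ[k] H ⊗[k] M :=
  TensorProduct.map (μH k H) aL ∘ₗ tt k H H H M ∘ₗ TensorProduct.map LinearMap.id cL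

/-- left-left Yetter–Drinfeld compatibility -/
def CondYDl (aL : H ⊗[k] M →ₗ[k] M) (cL : M →ₗ[k] H ⊗[k] M) : Prop :=
  ∀ (h : H) (m : M),
    ydlL k H aL cL (δH k H h ⊗ₜ m) = ydlR k H aL cL (δH k H h ⊗ₜ m)

/-- left-right Long compatibility -/
def CondLongLR (aL : H ⊗[k] M →ₗ[k] M) (cR : M →ₗ[k] M ⊗[k] H) : Prop :=
  ∀ (h : H) (m : M),
    cR (aL (h ⊗ₜ m))
      = TensorProduct.map aL LinearMap.id ((TensorProduct.assoc k H M H).symm (h ⊗ₜ cR m))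

/-- `m⊗(h₁⊗h₂) ↦ (m·h₂)⁽⁰⁾ ⊗ h₁(m·h₂)⁽¹⁾` -/
def ydrL (aR : M ⊗[k] H →ₗ[k] M) (cR : M →ₗ[k] M ⊗[k] H) :
    M ⊗[k] (H ⊗[k] H) →ₗ[k] M ⊗[k] H :=
  TensorProduct.map LinearMap.id (μH k H ∘ₗ sw k H H)
    ∘ₗ asl k M H H
    ∘ₗ TensorProduct.map (cR ∘ₗ aR) LinearMap.id
    ∘ₗ asr k M H H
    ∘ₗ TensorProduct.map LinearMap.id (sw k H H)

/-- `m⊗(h₁⊗h₂) ↦ m⁽⁰⁾·h₁ ⊗ m⁽¹⁾h₂` -/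
def ydrR (aR : M ⊗[k] H →ₗ[k] M) (cR : M →ₗ[k] M ⊗[k] H) :
    M ⊗[k] (H ⊗[k] H) →ₗ[k] M ⊗[k] H :=
  TensorProduct.map aR (μH k H) ∘ₗ tt k M H H H ∘ₗ TensorProduct.map cR LinearMap.id

/-- right-right Yetter–Drinfeld compatibility -/
def CondYDr (aR : M ⊗[k] H →ₗ[k] M) (cR : M →ₗ[k] M ⊗[k] H) : Prop :=
  ∀ (h : H) (m : M),
    ydrL k H aR cR (m ⊗ₜ δH k H h) = ydrR k H aR cR (m ⊗ₜ δH k H h)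

/-- right-left Long compatibility -/
def CondLongRL (aR : M ⊗[k] H →ₗ[k] M) (cL : M →ₗ[k] H ⊗[k] M) : Prop :=
  ∀ (m : M) (h : H),
    cL (aR (m ⊗ₜ h))
      = TensorProduct.map LinearMap.id aR (TensorProduct.assoc k H M H (cL m ⊗ₜ h))

/-- objects of the category LR(H) -/
def IsLRObj (aL : H ⊗[k] M →ₗ[k] M) (aR : M ⊗[k] H →ₗ[k] M)
    (cL : M →ₗ[k] H ⊗[k] M) (cR : M →ₗ[k] M ⊗[k] H) : Prop :=
  IsBimodule k H aL aR ∧ IsBicomodule k H cL cR ∧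
  CondYDl k H aL cL ∧ CondLongLR k H aL cR ∧ CondYDr k H aR cR ∧ CondLongRL k H aR cL


variable {P : Type*} [AddCommGroup P] [Module k P]

/-- diagonal left action on `M ⊗ N` -/
def tActL (aLM : H ⊗[k] M →ₗ[k] M) (aLN : H ⊗[k] N →ₗ[k] N) :
    H ⊗[k] (M ⊗[k] N) →ₗ[k] M ⊗[k] N :=
  TensorProduct.map aLM aLN ∘ₗ tt k H H M N ∘ₗ TensorProduct.map (δH k H) LinearMap.id

/-- diagonal right action on `M ⊗ N` -/
def tActR (aRM : M ⊗[k] H →ₗ[k] M) (aRN : N ⊗[k] H →ₗ[k] N) :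
    (M ⊗[k] N) ⊗[k] H →ₗ[k] M ⊗[k] N :=
  TensorProduct.map aRM aRN ∘ₗ tt k M N H H ∘ₗ TensorProduct.map LinearMap.id (δH k H)

/-- codiagonal left coaction on `M ⊗ N` -/
def tCoactL (cLM : M →ₗ[k] H ⊗[k] M) (cLN : N →ₗ[k] H ⊗[k] N) :
    M ⊗[k] N →ₗ[k] H ⊗[k] (M ⊗[k] N) :=
  TensorProduct.map (μH k H) LinearMap.id ∘ₗ tt k H M H N ∘ₗ TensorProduct.map cLM cLN

/-- codiagonal right coaction on `M ⊗ N` -/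
def tCoactR (cRM : M →ₗ[k] M ⊗[k] H) (cRN : N →ₗ[k] N ⊗[k] H) :
    M ⊗[k] N →ₗ[k] (M ⊗[k] N) ⊗[k] H :=
  TensorProduct.map LinearMap.id (μH k H) ∘ₗ tt k M H N H ∘ₗ TensorProduct.map cRM cRN

/-- the (pre)braiding `m ⊗ n ↦ m⁽⁻¹⁾·n⁽⁰⁾ ⊗ m⁽⁰⁾·n⁽¹⁾` of LR(H) -/
def braid (cLM : M →ₗ[k] H ⊗[k] M) (aRM : M ⊗[k] H →ₗ[k] M)
    (aLN : H ⊗[k] N →ₗ[k] N) (cRN : N →ₗ[k] N ⊗[k] H) :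
    M ⊗[k] N →ₗ[k] N ⊗[k] M :=
  TensorProduct.map aLN aRM ∘ₗ tt k H M N H ∘ₗ TensorProduct.map cLM cRN

/-- coalgebra axioms for explicit comultiplication and counit -/
def IsCoalg (Δd : M →ₗ[k] M ⊗[k] M) (εd : M →ₗ[k] k) : Prop :=
  (∀ m : M, TensorProduct.lid k M (TensorProduct.map εd LinearMap.id (Δd m)) = m) ∧
  (∀ m : M, TensorProduct.rid k M (TensorProduct.map LinearMap.id εd (Δd m)) = m) ∧
  ∀ m : M, TensorProduct.assoc k M M M (TensorProduct.map Δd LinearMap.id (Δd m))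
    = TensorProduct.map LinearMap.id Δd (Δd m)

/-- `M` is a left `H`-comodule coalgebra -/
def IsLComodCoalg (cL : M →ₗ[k] H ⊗[k] M) (Δd : M →ₗ[k] M ⊗[k] M) (εd : M →ₗ[k] k) : Prop :=
  (∀ m : M,
    TensorProduct.map (μH k H) LinearMap.id (tt k H M H M (TensorProduct.map cL cL (Δd m)))
      = TensorProduct.map LinearMap.id Δd (cL m)) ∧
  ∀ m : M, TensorProduct.rid k H (TensorProduct.map LinearMap.id εd (cL m)) = εd m • (1 : H)

/-- `M` is a right `H`-comodule coalgebra -/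
def IsRComodCoalg (cR : M →ₗ[k] M ⊗[k] H) (Δd : M →ₗ[k] M ⊗[k] M) (εd : M →ₗ[k] k) : Prop :=
  (∀ m : M,
    TensorProduct.map LinearMap.id (μH k H) (tt k M H M H (TensorProduct.map cR cR (Δd m)))
      = TensorProduct.map Δd LinearMap.id (cR m)) ∧
  ∀ m : M, TensorProduct.lid k H (TensorProduct.map εd LinearMap.id (cR m)) = εd m • (1 : H)

/-- morphisms of LR(H) -/
def IsLRHom {M' : Type*} [AddCommGroup M'] [Module k M']
    (aLM : H ⊗[k] M →ₗ[k] M) (aRM : M ⊗[k] H →ₗ[k] M)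
    (cLM : M →ₗ[k] H ⊗[k] M) (cRM : M →ₗ[k] M ⊗[k] H)
    (aLM' : H ⊗[k] M' →ₗ[k] M') (aRM' : M' ⊗[k] H →ₗ[k] M')
    (cLM' : M' →ₗ[k] H ⊗[k] M') (cRM' : M' →ₗ[k] M' ⊗[k] H)
    (f : M →ₗ[k] M') : Prop :=
  (∀ (h : H) (m : M), f (aLM (h ⊗ₜ m)) = aLM' (h ⊗ₜ f m)) ∧
  (∀ (m : M) (h : H), f (aRM (m ⊗ₜ h)) = aRM' (f m ⊗ₜ h)) ∧
  (∀ m : M, cLM' (f m) = TensorProduct.map LinearMap.id f (cLM m)) ∧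
  (∀ m : M, cRM' (f m) = TensorProduct.map f LinearMap.id (cRM m))


end Conditions

section AlgebraConditions
variable (H : Type*) [Ring H] [Bialgebra k H]
variable {D : Type*} [Ring D] [Algebra k D]

/-- multiplication of `D` -/
def μD : D ⊗[k] D →ₗ[k] D := LinearMap.mul' k D

/-- `D` is a left `H`-module algebra -/
def IsLeftModuleAlgebra (aL : H ⊗[k] D →ₗ[k] D) : Prop :=
  (∀ h : H, aL (h ⊗ₜ (1 : D)) = εH k H h • (1 : D)) ∧
  ∀ (h : H) (c d : D),
    aL (h ⊗ₜ (c * d))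
      = μD k (TensorProduct.map aL aL (tt k H H D D (δH k H h ⊗ₜ (c ⊗ₜ d))))

/-- `D` is a right `H`-module algebra -/
def IsRightModuleAlgebra (aR : D ⊗[k] H →ₗ[k] D) : Prop :=
  (∀ h : H, aR ((1 : D) ⊗ₜ h) = εH k H h • (1 : D)) ∧
  ∀ (c d : D) (h : H),
    aR ((c * d) ⊗ₜ h)
      = μD k (TensorProduct.map aR aR (tt k D D H H ((c ⊗ₜ d) ⊗ₜ δH k H h)))

/-- `ε_D` is an algebra map -/
def CondCounitAlg (εd : D →ₗ[k] k) : Prop :=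
  εd 1 = 1 ∧ ∀ c d : D, εd (c * d) = εd c * εd d

/-- `ε_D(h·d) = ε(h)ε_D(d)` and `ε_D(d·h) = ε_D(d)ε(h)` -/
def CondCounitActs (aL : H ⊗[k] D →ₗ[k] D) (aR : D ⊗[k] H →ₗ[k] D) (εd : D →ₗ[k] k) : Prop :=
  ∀ (h : H) (d : D), εd (aL (h ⊗ₜ d)) = εH k H h * εd d ∧ εd (aR (d ⊗ₜ h)) = εd d * εH k H h

/-- unitality of the coactions and of the comultiplication of `D` -/
def CondUnits (cL : D →ₗ[k] H ⊗[k] D) (cR : D →ₗ[k] D ⊗[k] H) (Δd : D →ₗ[k] D ⊗[k] D) : Prop :=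
  cL 1 = 1 ⊗ₜ 1 ∧ cR 1 = 1 ⊗ₜ 1 ∧ Δd 1 = 1 ⊗ₜ 1

/-- both coactions of `D` are multiplicative -/
def CondCoactMul (cL : D →ₗ[k] H ⊗[k] D) (cR : D →ₗ[k] D ⊗[k] H) : Prop :=
  (∀ c d : D, cL (c * d)
      = TensorProduct.map (μH k H) (μD k) (tt k H D H D (cL c ⊗ₜ cL d))) ∧
  ∀ c d : D, cR (c * d)
      = TensorProduct.map (μD k) (μH k H) (tt k D H D H (cR c ⊗ₜ cR d))

/-- `Δ_D` is an `H`-bimodule map -/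
def CondComulAct (aL : H ⊗[k] D →ₗ[k] D) (aR : D ⊗[k] H →ₗ[k] D)
    (Δd : D →ₗ[k] D ⊗[k] D) : Prop :=
  (∀ (h : H) (d : D), Δd (aL (h ⊗ₜ d))
      = TensorProduct.map aL aL (tt k H H D D (δH k H h ⊗ₜ Δd d))) ∧
  ∀ (d : D) (h : H), Δd (aR (d ⊗ₜ h))
      = TensorProduct.map aR aR (tt k D D H H (Δd d ⊗ₜ δH k H h))

/-- `Δ_D(cd) = c₁(c₂⁽⁻¹⁾·d₁⁽⁰⁾) ⊗ (c₂⁽⁰⁾·d₁⁽¹⁾)d₂` -/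
def CondBraidMul (aL : H ⊗[k] D →ₗ[k] D) (aR : D ⊗[k] H →ₗ[k] D)
    (cL : D →ₗ[k] H ⊗[k] D) (cR : D →ₗ[k] D ⊗[k] H) (Δd : D →ₗ[k] D ⊗[k] D) : Prop :=
  ∀ c d : D, Δd (c * d)
    = TensorProduct.map (μD k) (μD k)
        (middle k (braid k H cL aR aL cR) (Δd c ⊗ₜ Δd d))

/-- `c⁽⁰⁾·d⁽⁻¹⁾ ⊗ c⁽¹⁾·d⁽⁰⁾ = c ⊗ d` -/
def Cond114 (aL : H ⊗[k] D →ₗ[k] D) (aR : D ⊗[k] H →ₗ[k] D)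
    (cL : D →ₗ[k] H ⊗[k] D) (cR : D →ₗ[k] D ⊗[k] H) : Prop :=
  ∀ c d : D, TensorProduct.map aR aL (tt k D H H D (cR c ⊗ₜ cL d)) = c ⊗ₜ d

/-- `(H, D)` is an L-R-admissible pair -/
def LRAdmissible (aL : H ⊗[k] D →ₗ[k] D) (aR : D ⊗[k] H →ₗ[k] D)
    (cL : D →ₗ[k] H ⊗[k] D) (cR : D →ₗ[k] D ⊗[k] H)
    (Δd : D →ₗ[k] D ⊗[k] D) (εd : D →ₗ[k] k) : Prop :=
  IsBimodule k H aL aR ∧ IsLeftModuleAlgebra k H aL ∧ IsRightModuleAlgebra k H aR ∧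
  IsBicomodule k H cL cR ∧ IsCoalg k Δd εd ∧
  IsLComodCoalg k H cL Δd εd ∧ IsRComodCoalg k H cR Δd εd ∧
  CondCounitAlg k εd ∧ CondCounitActs k H aL aR εd ∧ CondUnits k H cL cR Δd ∧
  CondCoactMul k H cL cR ∧ CondComulAct k H aL aR Δd ∧ CondBraidMul k H aL aR cL cR Δd ∧
  CondYDl k H aL cL ∧ CondLongLR k H aL cR ∧ CondYDr k H aR cR ∧ CondLongRL k H aR cL ∧
  Cond114 k H aL aR cL cR

/-- `Σ (d·h'₂) ⊗ h'₁` -/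
def Xel (aR : D ⊗[k] H →ₗ[k] D) (d : D) (h' : H) : D ⊗[k] H :=
  TensorProduct.map aR LinearMap.id
    ((TensorProduct.assoc k D H H).symm (d ⊗ₜ TensorProduct.comm k H H (δH k H h')))

/-- `Σ (h₁·d') ⊗ h₂` -/
def Yel (aL : H ⊗[k] D →ₗ[k] D) (h : H) (d' : D) : D ⊗[k] H :=
  TensorProduct.comm k H D
    (TensorProduct.map LinearMap.id aL
      (TensorProduct.assoc k H H D
        (TensorProduct.map (sw k H H) LinearMap.id (δH k H h ⊗ₜ d'))))

/-- the element `(d·h'₂)(h₁·d') ⊗ h₂h'₁` of the L-R-smash product -/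
def smashMulExpr (aL : H ⊗[k] D →ₗ[k] D) (aR : D ⊗[k] H →ₗ[k] D)
    (d : D) (h : H) (d' : D) (h' : H) : D ⊗[k] H :=
  TensorProduct.map (μD k) (μH k H ∘ₗ sw k H H)
    (tt k D H D H (Xel k H aR d h' ⊗ₜ Yel k H aL h d'))

end AlgebraConditions

section CoproductGeneric
variable (H : Type*) [Ring H] [Bialgebra k H]
variable {D : Type*} [AddCommGroup D] [Module k D]

/-- structure map of the L-R-smash coproduct:
`(d₁⊗d₂)⊗(h₁⊗h₂) ↦ (d₁⁽⁰⁾ ⊗ d₂⁽⁻¹⁾h₁) ⊗ (d₂⁽⁰⁾ ⊗ h₂d₁⁽¹⁾)` -/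
def Wmap (cL : D →ₗ[k] H ⊗[k] D) (cR : D →ₗ[k] D ⊗[k] H) :
    (D ⊗[k] D) ⊗[k] (H ⊗[k] H) →ₗ[k] (D ⊗[k] H) ⊗[k] (D ⊗[k] H) :=
  TensorProduct.map
      (TensorProduct.map LinearMap.id (μH k H) ∘ₗ asl k D H H)
      (TensorProduct.map LinearMap.id (μH k H ∘ₗ sw k H H) ∘ₗ asl k D H H
        ∘ₗ TensorProduct.map (sw k H D) LinearMap.id)
    ∘ₗ tt k (D ⊗[k] H) (H ⊗[k] D) H H
    ∘ₗ TensorProduct.map (tt k D H H D) LinearMap.id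
    ∘ₗ TensorProduct.map (TensorProduct.map cR cL) LinearMap.id

/-- counit of the L-R-smash coproduct -/
def smashCounit (εd : D →ₗ[k] k) : D ⊗[k] H →ₗ[k] k :=
  LinearMap.mul' k k ∘ₗ TensorProduct.map εd (εH k H)



end CoproductGeneric

/-- the trivial right action `d·h = ε(h)d` -/
def trivActR {D : Type*} [AddCommGroup D] [Module k D] (H : Type*) [Ring H] [Bialgebra k H] :
    D ⊗[k] H →ₗ[k] D :=
  (TensorProduct.rid k D).toLinearMap ∘ₗ TensorProduct.map LinearMap.id (εH k H)

/-- the trivial right coaction `d ↦ d ⊗ 1` -/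
def trivCoactR {D : Type*} [AddCommGroup D] [Module k D] (H : Type*) [Ring H] [Bialgebra k H] :
    D →ₗ[k] D ⊗[k] H :=
  TensorProduct.map LinearMap.id (Algebra.linearMap k H) ∘ₗ (TensorProduct.rid k D).symm.toLinearMap

/-- the trivial left action `h·d = ε(h)d` -/
def trivActL {D : Type*} [AddCommGroup D] [Module k D] (H : Type*) [Ring H] [Bialgebra k H] :
    H ⊗[k] D →ₗ[k] D :=
  (TensorProduct.lid k D).toLinearMap ∘ₗ TensorProduct.map (εH k H) LinearMap.id

/-- the trivial left coaction `d ↦ 1 ⊗ d` -/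
def trivCoactL {D : Type*} [AddCommGroup D] [Module k D] (H : Type*) [Ring H] [Bialgebra k H] :
    D →ₗ[k] H ⊗[k] D :=
  TensorProduct.map (Algebra.linearMap k H) LinearMap.id ∘ₗ (TensorProduct.lid k D).symm.toLinearMap

section DoubleBiproduct
variable (H : Type*) [Ring H] [Bialgebra k H]
variable (A B : Type*) [Ring A] [Algebra k A] [Ring B] [Algebra k B]

/-- braiding of the left-left Yetter-Drinfeld category: `x ⊗ y ↦ x⁽⁻¹⁾·y ⊗ x⁽⁰⁾` -/
def braidYDl (cA : A →ₗ[k] H ⊗[k] A) (aA : H ⊗[k] A →ₗ[k] A) :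
    A ⊗[k] A →ₗ[k] A ⊗[k] A :=
  sw k A A ∘ₗ TensorProduct.map LinearMap.id aA ∘ₗ asl k A H A
    ∘ₗ TensorProduct.map (sw k H A) LinearMap.id ∘ₗ TensorProduct.map cA LinearMap.id

/-- braiding of the right-right Yetter-Drinfeld category: `x ⊗ y ↦ y⁽⁰⁾ ⊗ x·y⁽¹⁾` -/
def braidYDr (cB : B →ₗ[k] B ⊗[k] H) (aB : B ⊗[k] H →ₗ[k] B) :
    B ⊗[k] B →ₗ[k] B ⊗[k] B :=
  TensorProduct.map LinearMap.id aB ∘ₗ asl k B B H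
    ∘ₗ TensorProduct.map (sw k B B) LinearMap.id ∘ₗ asr k B B H
    ∘ₗ TensorProduct.map LinearMap.id cB

/-- `A` is a bialgebra in the left-left Yetter-Drinfeld category over `H` -/
def YDlBialgebra (aA : H ⊗[k] A →ₗ[k] A) (cA : A →ₗ[k] H ⊗[k] A)
    (ΔA : A →ₗ[k] A ⊗[k] A) (εA : A →ₗ[k] k) : Prop :=
  IsLeftModule k H aA ∧ IsLeftComodule k H cA ∧ CondYDl k H aA cA ∧
  IsLeftModuleAlgebra k H aA ∧
  (∀ a a' : A, cA (a * a')
      = TensorProduct.map (μH k H) (μD k) (tt k H A H A (cA a ⊗ₜ cA a'))) ∧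
  cA 1 = 1 ⊗ₜ 1 ∧ IsCoalg k ΔA εA ∧ CondCounitAlg k εA ∧
  (∀ (h : H) (a : A), εA (aA (h ⊗ₜ a)) = εH k H h * εA a) ∧ ΔA 1 = 1 ⊗ₜ 1 ∧
  (∀ (h : H) (a : A), ΔA (aA (h ⊗ₜ a))
      = TensorProduct.map aA aA (tt k H H A A (δH k H h ⊗ₜ ΔA a))) ∧
  IsLComodCoalg k H cA ΔA εA ∧
  ∀ a a' : A, ΔA (a * a')
      = TensorProduct.map (μD k) (μD k)
          (middle k (braidYDl k H A cA aA) (ΔA a ⊗ₜ ΔA a'))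

/-- `B` is a bialgebra in the right-right Yetter-Drinfeld category over `H` -/
def YDrBialgebra (aB : B ⊗[k] H →ₗ[k] B) (cB : B →ₗ[k] B ⊗[k] H)
    (ΔB : B →ₗ[k] B ⊗[k] B) (εB : B →ₗ[k] k) : Prop :=
  IsRightModule k H aB ∧ IsRightComodule k H cB ∧ CondYDr k H aB cB ∧
  IsRightModuleAlgebra k H aB ∧
  (∀ b b' : B, cB (b * b')
      = TensorProduct.map (μD k) (μH k H) (tt k B H B H (cB b ⊗ₜ cB b'))) ∧
  cB 1 = 1 ⊗ₜ 1 ∧ IsCoalg k ΔB εB ∧ CondCounitAlg k εB ∧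
  (∀ (b : B) (h : H), εB (aB (b ⊗ₜ h)) = εB b * εH k H h) ∧ ΔB 1 = 1 ⊗ₜ 1 ∧
  (∀ (b : B) (h : H), ΔB (aB (b ⊗ₜ h))
      = TensorProduct.map aB aB (tt k B B H H (ΔB b ⊗ₜ δH k H h))) ∧
  IsRComodCoalg k H cB ΔB εB ∧
  ∀ b b' : B, ΔB (b * b')
      = TensorProduct.map (μD k) (μD k)
          (middle k (braidYDr k H B cB aB) (ΔB b ⊗ₜ ΔB b'))

/-- the trivial-pairing condition `b² ▷ a² ⊗ b¹ ◁ a¹ = a ⊗ b` -/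
def PairingTrivial (aA : H ⊗[k] A →ₗ[k] A) (cA : A →ₗ[k] H ⊗[k] A)
    (aB : B ⊗[k] H →ₗ[k] B) (cB : B →ₗ[k] B ⊗[k] H) : Prop :=
  ∀ (a : A) (b : B),
    sw k B A (TensorProduct.map aB aA (tt k B H H A (cB b ⊗ₜ cA a))) = a ⊗ₜ b

/-- `Σ a(h₁ ▷ a') ⊗ h₂` -/
def P1 (aA : H ⊗[k] A →ₗ[k] A) (a : A) (h : H) (a' : A) : A ⊗[k] H :=
  TensorProduct.map (μD k) LinearMap.id
    ((TensorProduct.assoc k A A H).symm (a ⊗ₜ Yel k H aA h a'))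

/-- `Σ h'₁ ⊗ (b ◁ h'₂)b'` -/
def P2 (aB : B ⊗[k] H →ₗ[k] B) (b : B) (h' : H) (b' : B) : H ⊗[k] B :=
  TensorProduct.map LinearMap.id (μD k)
    (TensorProduct.assoc k H B B
      ((sw k B H
          (TensorProduct.map aB LinearMap.id
            ((TensorProduct.assoc k B H H).symm
              (TensorProduct.map LinearMap.id (sw k H H) (b ⊗ₜ δH k H h'))))) ⊗ₜ b'))

/-- `(x⊗u)⊗(v⊗y) ↦ (x ⊗ uv) ⊗ y` -/
def combineAHB : (A ⊗[k] H) ⊗[k] (H ⊗[k] B) →ₗ[k] (A ⊗[k] H) ⊗[k] B :=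
  TensorProduct.map (TensorProduct.map LinearMap.id (μH k H)) LinearMap.id
    ∘ₗ TensorProduct.map (asl k A H H) LinearMap.id
    ∘ₗ (TensorProduct.assoc k (A ⊗[k] H) H B).symm.toLinearMap

/-- the element `a(h₁▷a') # h₂h'₁ # (b◁h'₂)b'` of the double biproduct -/
def dblMulExpr (aA : H ⊗[k] A →ₗ[k] A) (aB : B ⊗[k] H →ₗ[k] B)
    (a : A) (h : H) (b : B) (a' : A) (h' : H) (b' : B) : (A ⊗[k] H) ⊗[k] B :=
  combineAHB k H A B (P1 k H A aA a h a' ⊗ₜ P2 k H B aB b h' b')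

/-- comultiplication map of the double biproduct:
`((a₁⊗a₂)⊗(h₁⊗h₂))⊗(b₁⊗b₂) ↦ (a₁ # a₂¹h₁ # b₁¹) ⊗ (a₂² # h₂b₁² # b₂)` -/
def Wd (cA : A →ₗ[k] H ⊗[k] A) (cB : B →ₗ[k] B ⊗[k] H) :
    ((A ⊗[k] A) ⊗[k] (H ⊗[k] H)) ⊗[k] (B ⊗[k] B) →ₗ[k]
      ((A ⊗[k] H) ⊗[k] B) ⊗[k] ((A ⊗[k] H) ⊗[k] B) :=
  TensorProduct.map LinearMap.id
      (TensorProduct.map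
          (TensorProduct.map LinearMap.id (μH k H) ∘ₗ asl k A H H ∘ₗ sw k H (A ⊗[k] H))
          LinearMap.id
        ∘ₗ (TensorProduct.assoc k H (A ⊗[k] H) B).symm.toLinearMap)
    ∘ₗ (TensorProduct.assoc k ((A ⊗[k] H) ⊗[k] B) H ((A ⊗[k] H) ⊗[k] B)).toLinearMap
    ∘ₗ TensorProduct.map (TensorProduct.assoc k (A ⊗[k] H) B H).symm.toLinearMap LinearMap.id
    ∘ₗ tt k (A ⊗[k] H) (A ⊗[k] H) (B ⊗[k] H) B
    ∘ₗ TensorProduct.map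
        (TensorProduct.map (TensorProduct.map LinearMap.id (μH k H) ∘ₗ asl k A H H) LinearMap.id)
        LinearMap.id
    ∘ₗ TensorProduct.map (tt k (A ⊗[k] H) A H H) LinearMap.id
    ∘ₗ TensorProduct.map
        (TensorProduct.map
          ((TensorProduct.assoc k A H A).symm.toLinearMap ∘ₗ TensorProduct.map LinearMap.id cA)
          LinearMap.id)
        (TensorProduct.map cB LinearMap.id)

/-- counit of the double biproduct -/
def dblCounit (εA : A →ₗ[k] k) (εB : B →ₗ[k] k) : (A ⊗[k] H) ⊗[k] B →ₗ[k] k :=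
  LinearMap.mul' k k
    ∘ₗ TensorProduct.map (LinearMap.mul' k k ∘ₗ TensorProduct.map εA (εH k H)) εB

/-- induced left action on `D = A ⊗ B` -/
def dActL (aA : H ⊗[k] A →ₗ[k] A) : H ⊗[k] (A ⊗[k] B) →ₗ[k] A ⊗[k] B :=
  TensorProduct.map aA LinearMap.id ∘ₗ asr k H A B

/-- induced right action on `D = A ⊗ B` -/
def dActR (aB : B ⊗[k] H →ₗ[k] B) : (A ⊗[k] B) ⊗[k] H →ₗ[k] A ⊗[k] B :=
  TensorProduct.map LinearMap.id aB ∘ₗ asl k A B H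

/-- induced left coaction on `D = A ⊗ B` -/
def dCoactL (cA : A →ₗ[k] H ⊗[k] A) : A ⊗[k] B →ₗ[k] H ⊗[k] (A ⊗[k] B) :=
  asl k H A B ∘ₗ TensorProduct.map cA LinearMap.id

/-- induced right coaction on `D = A ⊗ B` -/
def dCoactR (cB : B →ₗ[k] B ⊗[k] H) : A ⊗[k] B →ₗ[k] (A ⊗[k] B) ⊗[k] H :=
  asr k A B H ∘ₗ TensorProduct.map LinearMap.id cB

/-- tensor product comultiplication on `D = A ⊗ B` -/
def dComul (ΔA : A →ₗ[k] A ⊗[k] A) (ΔB : B →ₗ[k] B ⊗[k] B) :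
    A ⊗[k] B →ₗ[k] (A ⊗[k] B) ⊗[k] (A ⊗[k] B) :=
  tt k A A B B ∘ₗ TensorProduct.map ΔA ΔB

/-- tensor product counit on `D = A ⊗ B` -/
def dCounit (εA : A →ₗ[k] k) (εB : B →ₗ[k] k) : A ⊗[k] B →ₗ[k] k :=
  LinearMap.mul' k k ∘ₗ TensorProduct.map εA εB

/-- `(a ⊗ b) ⊗ h ↦ (a ⊗ h) ⊗ b` -/
def phiAB : (A ⊗[k] B) ⊗[k] H →ₗ[k] (A ⊗[k] H) ⊗[k] B :=
  asr k A H B ∘ₗ TensorProduct.map LinearMap.id (sw k B H) ∘ₗ asl k A B H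

end DoubleBiproduct

section Pointwise
variable (H : Type*) [Ring H] [Bialgebra k H]
variable (M N : Type*) [AddCommGroup M] [Module k M] [AddCommGroup N] [Module k N]

/-- left action on `M ⊗ N` through the first factor -/
def pActL (aLM : H ⊗[k] M →ₗ[k] M) : H ⊗[k] (M ⊗[k] N) →ₗ[k] M ⊗[k] N :=
  TensorProduct.map aLM LinearMap.id ∘ₗ asr k H M N

/-- right action on `M ⊗ N` through the second factor -/
def pActR (aRN : N ⊗[k] H →ₗ[k] N) : (M ⊗[k] N) ⊗[k] H →ₗ[k] M ⊗[k] N :=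
  TensorProduct.map LinearMap.id aRN ∘ₗ asl k M N H

/-- left coaction on `M ⊗ N` through the first factor -/
def pCoactL (cLM : M →ₗ[k] H ⊗[k] M) : M ⊗[k] N →ₗ[k] H ⊗[k] (M ⊗[k] N) :=
  asl k H M N ∘ₗ TensorProduct.map cLM LinearMap.id

/-- right coaction on `M ⊗ N` through the second factor -/
def pCoactR (cRN : N →ₗ[k] N ⊗[k] H) : M ⊗[k] N →ₗ[k] (M ⊗[k] N) ⊗[k] H :=
  asr k M N H ∘ₗ TensorProduct.map LinearMap.id cRN

end Pointwise

section Identities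
variable (H : Type*) [Ring H] [Bialgebra k H]
variable (D : Type*) [Ring D] [Algebra k D]

/-- `c₂ ⊗ (h₁ ⊗ (d₁⁽⁰⁾ ⊗ d₁⁽¹⁾)) ↦ (c₂⁽⁻¹⁾h₁·d₁⁽⁰⁾) ⊗ (c₂⁽⁰⁾·d₁⁽¹⁾)` -/
def Fmap (aL : H ⊗[k] D →ₗ[k] D) (aR : D ⊗[k] H →ₗ[k] D) (cL : D →ₗ[k] H ⊗[k] D) :
    D ⊗[k] (H ⊗[k] (D ⊗[k] H)) →ₗ[k] D ⊗[k] D :=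
  TensorProduct.map aL LinearMap.id
    ∘ₗ asr k H D D
    ∘ₗ TensorProduct.map LinearMap.id
        (sw k D D ∘ₗ TensorProduct.map aR LinearMap.id ∘ₗ asr k D H D
          ∘ₗ TensorProduct.map LinearMap.id (sw k D H))
    ∘ₗ TensorProduct.map (μH k H) LinearMap.id
    ∘ₗ tt k H D H (D ⊗[k] H)
    ∘ₗ TensorProduct.map cL LinearMap.id

/-- `(h₁⊗h₂)⊗(c⊗d) ↦ [c(h₁·d)]₁ ⊗ ([c(h₁·d)]₂⁽⁻¹⁾h₂ ⊗ [c(h₁·d)]₂⁽⁰⁾)` -/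
def L3map (aL : H ⊗[k] D →ₗ[k] D) (cL : D →ₗ[k] H ⊗[k] D) (Δd : D →ₗ[k] D ⊗[k] D) :
    (H ⊗[k] H) ⊗[k] (D ⊗[k] D) →ₗ[k] D ⊗[k] (H ⊗[k] D) :=
  TensorProduct.map LinearMap.id (TensorProduct.map (μH k H) LinearMap.id)
    ∘ₗ TensorProduct.map LinearMap.id (asr k H H D)
    ∘ₗ asl k D H (H ⊗[k] D)
    ∘ₗ tt k D H H D
    ∘ₗ TensorProduct.map (sw k H D) LinearMap.id
    ∘ₗ asr k H D (H ⊗[k] D)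
    ∘ₗ TensorProduct.map LinearMap.id (TensorProduct.map LinearMap.id cL)
    ∘ₗ TensorProduct.map LinearMap.id Δd
    ∘ₗ TensorProduct.map LinearMap.id (μD k)
    ∘ₗ asl k H D D
    ∘ₗ TensorProduct.map LinearMap.id aL
    ∘ₗ tt k H H D D
    ∘ₗ TensorProduct.map (sw k H H) LinearMap.id

/-- `((h₁⊗h₂)⊗h₃)⊗((c₁⊗c₂)⊗(d₁⊗d₂)) ↦`
`c₁(c₂⁽⁻¹⁾h₁·d₁⁽⁰⁾) ⊗ (c₂⁽⁰⁾⁽⁻¹⁾h₂d₂⁽⁻¹⁾ ⊗ (c₂⁽⁰⁾⁽⁰⁾·d₁⁽¹⁾)(h₃·d₂⁽⁰⁾))` -/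
def R3map (aL : H ⊗[k] D →ₗ[k] D) (aR : D ⊗[k] H →ₗ[k] D)
    (cL : D →ₗ[k] H ⊗[k] D) (cR : D →ₗ[k] D ⊗[k] H) :
    ((H ⊗[k] H) ⊗[k] H) ⊗[k] ((D ⊗[k] D) ⊗[k] (D ⊗[k] D)) →ₗ[k]
      D ⊗[k] (H ⊗[k] D) :=
  TensorProduct.map (μD k) LinearMap.id
    ∘ₗ asr k D D (H ⊗[k] D)
    ∘ₗ TensorProduct.map LinearMap.id
        (asl k D H D
          ∘ₗ TensorProduct.map LinearMap.id (μD k)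
          ∘ₗ TensorProduct.map (TensorProduct.map aL (μH k H)) (TensorProduct.map aR aL)
          ∘ₗ TensorProduct.map (tt k H H D H) (tt k D H H D)
          ∘ₗ tt k (H ⊗[k] H) (D ⊗[k] H) (D ⊗[k] H) (H ⊗[k] D)
          ∘ₗ TensorProduct.map LinearMap.id (tt k D H H D))
    ∘ₗ asl k D ((H ⊗[k] H) ⊗[k] (D ⊗[k] H)) ((D ⊗[k] H) ⊗[k] (H ⊗[k] D))
    ∘ₗ TensorProduct.map
        (TensorProduct.map LinearMap.id
          (TensorProduct.map (TensorProduct.map (μH k H) (μH k H)) LinearMap.id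
            ∘ₗ TensorProduct.map (tt k H H H H) LinearMap.id
            ∘ₗ tt k (H ⊗[k] H) D (H ⊗[k] H) H))
        LinearMap.id
    ∘ₗ TensorProduct.map (asl k D ((H ⊗[k] H) ⊗[k] D) ((H ⊗[k] H) ⊗[k] H)) LinearMap.id
    ∘ₗ TensorProduct.map (sw k ((H ⊗[k] H) ⊗[k] H) (D ⊗[k] ((H ⊗[k] H) ⊗[k] D))) LinearMap.id
    ∘ₗ asr k ((H ⊗[k] H) ⊗[k] H) (D ⊗[k] ((H ⊗[k] H) ⊗[k] D))
        ((D ⊗[k] H) ⊗[k] (H ⊗[k] D))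
    ∘ₗ TensorProduct.map LinearMap.id
        (TensorProduct.map (TensorProduct.map LinearMap.id (asr k H H D)) LinearMap.id)
    ∘ₗ TensorProduct.map LinearMap.id
        (TensorProduct.map
          (TensorProduct.map LinearMap.id (TensorProduct.map LinearMap.id cL ∘ₗ cL))
          (TensorProduct.map cR cL))

end Identities

section Radford
variable (H : Type*) [Ring H] [Bialgebra k H]
variable (D : Type*) [Ring D] [Algebra k D]

/-- Radford's admissible-pair conditions for a left module algebra, left comodule
coalgebra `D` -/
def RadfordAdmissible (aL : H ⊗[k] D →ₗ[k] D) (cL : D →ₗ[k] H ⊗[k] D)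
    (Δd : D →ₗ[k] D ⊗[k] D) (εd : D →ₗ[k] k) : Prop :=
  IsLeftModule k H aL ∧ IsLeftModuleAlgebra k H aL ∧ IsLeftComodule k H cL ∧
  IsCoalg k Δd εd ∧ IsLComodCoalg k H cL Δd εd ∧ CondCounitAlg k εd ∧
  (∀ (h : H) (d : D), εd (aL (h ⊗ₜ d)) = εH k H h * εd d) ∧
  Δd 1 = 1 ⊗ₜ 1 ∧ cL 1 = 1 ⊗ₜ 1 ∧
  (∀ c d : D, cL (c * d)
      = TensorProduct.map (μH k H) (μD k) (tt k H D H D (cL c ⊗ₜ cL d))) ∧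
  (∀ (h : H) (d : D), Δd (aL (h ⊗ₜ d))
      = TensorProduct.map aL aL (tt k H H D D (δH k H h ⊗ₜ Δd d))) ∧
  (∀ c d : D, Δd (c * d)
      = TensorProduct.map (μD k) (μD k)
          (middle k (braidYDl k H D cL aL) (Δd c ⊗ₜ Δd d))) ∧
  CondYDl k H aL cL

/-- the element `d(h₁·d') ⊗ h₂h'` of the Radford biproduct -/
def radMulExpr (aL : H ⊗[k] D →ₗ[k] D) (d : D) (h : H) (d' : D) (h' : H) : D ⊗[k] H :=
  TensorProduct.map (μD k) (μH k H ∘ₗ sw k H H)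
    (tt k D H D H ((d ⊗ₜ h') ⊗ₜ Yel k H aL h d'))

/-- comultiplication map of the Radford biproduct:
`(d₁⊗d₂)⊗(h₁⊗h₂) ↦ (d₁ ⊗ d₂⁽⁻¹⁾h₁) ⊗ (d₂⁽⁰⁾ ⊗ h₂)` -/
def WRad (cL : D →ₗ[k] H ⊗[k] D) :
    (D ⊗[k] D) ⊗[k] (H ⊗[k] H) →ₗ[k] (D ⊗[k] H) ⊗[k] (D ⊗[k] H) :=
  TensorProduct.map (TensorProduct.map LinearMap.id (μH k H) ∘ₗ asl k D H H) LinearMap.id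
    ∘ₗ tt k (D ⊗[k] H) D H H
    ∘ₗ TensorProduct.map (asr k D H D) LinearMap.id
    ∘ₗ TensorProduct.map (TensorProduct.map LinearMap.id cL) LinearMap.id

/-- `(h₁·d) ⊗ h₂` reversed version: `(h₂·d) ⊗ h₁` -/
def Y2el (aL : H ⊗[k] D →ₗ[k] D) (h : H) (d : D) : D ⊗[k] H :=
  TensorProduct.comm k H D
    (TensorProduct.map LinearMap.id aL (TensorProduct.assoc k H H D (δH k H h ⊗ₜ d)))

/-- `(d·h₁) ⊗ h₂` -/
def X1el (aR : D ⊗[k] H →ₗ[k] D) (d : D) (h : H) : D ⊗[k] H :=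
  TensorProduct.map aR LinearMap.id ((TensorProduct.assoc k D H H).symm (d ⊗ₜ δH k H h))

end Radford
end LRPaper

namespace LRPaper
section Aux
variable {k : Type*} [CommRing k]

@[simp] lemma tt_tmul {A B C E : Type*} [AddCommGroup A] [Module k A] [AddCommGroup B]
    [Module k B] [AddCommGroup C] [Module k C] [AddCommGroup E] [Module k E]
    (a : A) (b : B) (c : C) (e : E) :
    tt k A B C E ((a ⊗ₜ b) ⊗ₜ (c ⊗ₜ e)) = (a ⊗ₜ c) ⊗ₜ (b ⊗ₜ e) := by
  simp [tt]

@[simp] lemma asl_tmul {A B C : Type*} [AddCommGroup A] [Module k A] [AddCommGroup B]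
    [Module k B] [AddCommGroup C] [Module k C] (a : A) (b : B) (c : C) :
    asl k A B C ((a ⊗ₜ b) ⊗ₜ c) = a ⊗ₜ (b ⊗ₜ c) := rfl

@[simp] lemma asr_tmul {A B C : Type*} [AddCommGroup A] [Module k A] [AddCommGroup B]
    [Module k B] [AddCommGroup C] [Module k C] (a : A) (b : B) (c : C) :
    asr k A B C (a ⊗ₜ (b ⊗ₜ c)) = (a ⊗ₜ b) ⊗ₜ c := rfl

@[simp] lemma sw_tmul {A B : Type*} [AddCommGroup A] [Module k A] [AddCommGroup B]
    [Module k B] (a : A) (b : B) : sw k A B (a ⊗ₜ b) = b ⊗ₜ a := rfl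

variable {H : Type*} [Ring H] [Bialgebra k H]

@[simp] lemma μH_tmul (x y : H) : μH k H (x ⊗ₜ y) = x * y := rfl

lemma δH_one : δH k H (1 : H) = (1 : H) ⊗ₜ[k] (1 : H) := by
  simp [δH, Algebra.TensorProduct.one_def]

lemma coassoc' (h : H) :
    asl k H H H (TensorProduct.map (δH k H) LinearMap.id (δH k H h))
      = TensorProduct.map LinearMap.id (δH k H) (δH k H h) := by
  simpa [δH, asl, LinearMap.rTensor, LinearMap.lTensor] using Coalgebra.coassoc_apply (R := k) h

end Aux
section Aux2
variable {k : Type*} [CommRing k] {H : Type*} [Ring H] [Bialgebra k H]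
variable {M N : Type*} [AddCommGroup M] [Module k M] [AddCommGroup N] [Module k N]
variable (aLM : H ⊗[k] M →ₗ[k] M) (aRM : M ⊗[k] H →ₗ[k] M)
variable (cLM : M →ₗ[k] H ⊗[k] M) (cRM : M →ₗ[k] M ⊗[k] H)
variable (aLN : H ⊗[k] N →ₗ[k] N) (aRN : N ⊗[k] H →ₗ[k] N)
variable (cLN : N →ₗ[k] H ⊗[k] N) (cRN : N →ₗ[k] N ⊗[k] H)

/-- action of a split tensor -/
def actLL : (H ⊗[k] H) ⊗[k] (M ⊗[k] N) →ₗ[k] M ⊗[k] N :=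
  TensorProduct.map aLM aLN ∘ₗ tt k H H M N

def actRR : (M ⊗[k] N) ⊗[k] (H ⊗[k] H) →ₗ[k] M ⊗[k] N :=
  TensorProduct.map aRM aRN ∘ₗ tt k M N H H

/-- combine left coactions -/
def cmbL : (H ⊗[k] M) ⊗[k] (H ⊗[k] N) →ₗ[k] H ⊗[k] (M ⊗[k] N) :=
  TensorProduct.map (μH k H) LinearMap.id ∘ₗ tt k H M H N

def cmbR : (M ⊗[k] H) ⊗[k] (N ⊗[k] H) →ₗ[k] (M ⊗[k] N) ⊗[k] H :=
  TensorProduct.map LinearMap.id (μH k H) ∘ₗ tt k M H N H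

@[simp] lemma actLL_tmul (x y : H) (z : M ⊗[k] N) :
    actLL aLM aLN ((x ⊗ₜ y) ⊗ₜ z) = TensorProduct.map aLM aLN (tt k H H M N ((x ⊗ₜ y) ⊗ₜ z)) := rfl

@[simp] lemma actRR_tmul (z : M ⊗[k] N) (x y : H) :
    actRR aRM aRN (z ⊗ₜ (x ⊗ₜ y)) = TensorProduct.map aRM aRN (tt k M N H H (z ⊗ₜ (x ⊗ₜ y))) := rfl

@[simp] lemma cmbL_tmul (u : H ⊗[k] M) (v : H ⊗[k] N) :
    cmbL (u ⊗ₜ v) = TensorProduct.map (μH k H) LinearMap.id (tt k H M H N (u ⊗ₜ v)) := rfl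

@[simp] lemma cmbR_tmul (u : M ⊗[k] H) (v : N ⊗[k] H) :
    cmbR (u ⊗ₜ v) = TensorProduct.map LinearMap.id (μH k H) (tt k M H N H (u ⊗ₜ v)) := rfl

@[simp] lemma tActL_tmul (h : H) (z : M ⊗[k] N) :
    tActL k H aLM aLN (h ⊗ₜ z) = actLL aLM aLN (δH k H h ⊗ₜ z) := rfl

@[simp] lemma tActR_tmul (h : H) (z : M ⊗[k] N) :
    tActR k H aRM aRN (z ⊗ₜ h) = actRR aRM aRN (z ⊗ₜ δH k H h) := rfl

@[simp] lemma tCoactL_tmul (m : M) (n : N) :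
    tCoactL k H cLM cLN (m ⊗ₜ n) = cmbL (cLM m ⊗ₜ cLN n) := rfl

@[simp] lemma tCoactR_tmul (m : M) (n : N) :
    tCoactR k H cRM cRN (m ⊗ₜ n) = cmbR (cRM m ⊗ₜ cRN n) := rfl

lemma ydlL_tmul (x y : H) (m : M) :
    ydlL k H aLM cLM ((x ⊗ₜ y) ⊗ₜ m)
      = TensorProduct.map (LinearMap.mulRight k y) LinearMap.id (cLM (aLM (x ⊗ₜ m))) := by
  simp only [ydlL, LinearMap.coe_comp, Function.comp_apply, TensorProduct.map_tmul,
    sw_tmul, asl_tmul, LinearMap.id_coe, id_eq]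
  induction cLM (aLM (x ⊗ₜ m)) using TensorProduct.induction_on with
  | zero => simp
  | tmul u v => simp
  | add p q hp hq => simp [TensorProduct.tmul_add, hp, hq]

lemma ydlR_tmul (x y : H) (m : M) :
    ydlR k H aLM cLM ((x ⊗ₜ y) ⊗ₜ m)
      = TensorProduct.map (LinearMap.mulLeft k x) (aLM ∘ₗ TensorProduct.mk k H M y) (cLM m) := by
  simp only [ydlR, LinearMap.coe_comp, Function.comp_apply, TensorProduct.map_tmul,
    LinearMap.id_coe, id_eq]
  induction cLM m using TensorProduct.induction_on with
  | zero => simp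
  | tmul u v => simp
  | add p q hp hq => simp [TensorProduct.tmul_add, hp, hq]

lemma ydrL_tmul (x y : H) (m : M) :
    ydrL k H aRM cRM (m ⊗ₜ (x ⊗ₜ y))
      = TensorProduct.map LinearMap.id (LinearMap.mulLeft k x) (cRM (aRM (m ⊗ₜ y))) := by
  simp only [ydrL, LinearMap.coe_comp, Function.comp_apply, TensorProduct.map_tmul,
    sw_tmul, asr_tmul, LinearMap.id_coe, id_eq]
  induction cRM (aRM (m ⊗ₜ y)) using TensorProduct.induction_on with
  | zero => simp
  | tmul u v => simp
  | add p q hp hq => simp [TensorProduct.add_tmul, hp, hq]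

lemma ydrR_tmul (x y : H) (m : M) :
    ydrR k H aRM cRM (m ⊗ₜ (x ⊗ₜ y))
      = TensorProduct.map (aRM ∘ₗ (TensorProduct.mk k M H).flip x) (LinearMap.mulRight k y)
          (cRM m) := by
  simp only [ydrR, LinearMap.coe_comp, Function.comp_apply, TensorProduct.map_tmul,
    LinearMap.id_coe, id_eq]
  induction cRM m using TensorProduct.induction_on with
  | zero => simp
  | tmul u v => simp
  | add p q hp hq => simp [TensorProduct.add_tmul, hp, hq]

end Aux2
section Aux3
variable {k : Type*} [CommRing k] {H : Type*} [Ring H] [Bialgebra k H]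
variable {M N : Type*} [AddCommGroup M] [Module k M] [AddCommGroup N] [Module k N]
variable {aLM : H ⊗[k] M →ₗ[k] M} {aRM : M ⊗[k] H →ₗ[k] M}
variable {cLM : M →ₗ[k] H ⊗[k] M} {cRM : M →ₗ[k] M ⊗[k] H}
variable {aLN : H ⊗[k] N →ₗ[k] N} {aRN : N ⊗[k] H →ₗ[k] N}
variable {cLN : N →ₗ[k] H ⊗[k] N} {cRN : N →ₗ[k] N ⊗[k] H}

lemma tensor_leftModule (hM : IsLeftModule k H aLM) (hN : IsLeftModule k H aLN) :
    IsLeftModule k H (tActL k H aLM aLN) := by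
  constructor
  · intro z
    induction z using TensorProduct.induction_on with
    | zero => simp
    | tmul m n => simp [δH_one, hM.1 m, hN.1 n]
    | add p q hp hq => simp only [TensorProduct.tmul_add, map_add, hp, hq]
  · intro h h' z
    have key : ∀ (t t' : H ⊗[k] H) (z : M ⊗[k] N),
        actLL aLM aLN ((t * t') ⊗ₜ z) = actLL aLM aLN (t ⊗ₜ actLL aLM aLN (t' ⊗ₜ z)) := by
      intro t t' z
      induction t using TensorProduct.induction_on with
      | zero => simp
      | add p q hp hq => simp only [add_mul, TensorProduct.add_tmul, map_add, hp, hq]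
      | tmul x y =>
        induction t' using TensorProduct.induction_on with
        | zero => simp
        | add p q hp hq =>
          simp only [mul_add, TensorProduct.add_tmul, map_add, TensorProduct.tmul_add, hp, hq]
        | tmul x' y' =>
          induction z using TensorProduct.induction_on with
          | zero => simp
          | add p q hp hq => simp only [TensorProduct.tmul_add, map_add, hp, hq]
          | tmul m n =>
            simp [Algebra.TensorProduct.tmul_mul_tmul, hM.2 x x' m, hN.2 y y' n]
    simp only [tActL_tmul, δH, Bialgebra.comul_mul]
    exact key _ _ _

lemma tensor_rightModule (hM : IsRightModule k H aRM) (hN : IsRightModule k H aRN) :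
    IsRightModule k H (tActR k H aRM aRN) := by
  constructor
  · intro z
    induction z using TensorProduct.induction_on with
    | zero => simp
    | tmul m n => simp [δH_one, hM.1 m, hN.1 n]
    | add p q hp hq => simp only [TensorProduct.add_tmul, map_add, hp, hq]
  · intro z h h'
    have key : ∀ (t t' : H ⊗[k] H) (z : M ⊗[k] N),
        actRR aRM aRN (z ⊗ₜ (t * t')) = actRR aRM aRN (actRR aRM aRN (z ⊗ₜ t) ⊗ₜ t') := by
      intro t t' z
      induction t using TensorProduct.induction_on with
      | zero => simp
      | add p q hp hq => simp only [add_mul, TensorProduct.tmul_add, map_add,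
          TensorProduct.add_tmul, hp, hq]
      | tmul x y =>
        induction t' using TensorProduct.induction_on with
        | zero => simp
        | add p q hp hq => simp only [mul_add, TensorProduct.tmul_add, map_add, hp, hq]
        | tmul x' y' =>
          induction z using TensorProduct.induction_on with
          | zero => simp
          | add p q hp hq => simp only [TensorProduct.add_tmul, map_add, hp, hq]
          | tmul m n =>
            simp [Algebra.TensorProduct.tmul_mul_tmul, hM.2 m x x', hN.2 n y y']
    simp only [tActR_tmul, δH, Bialgebra.comul_mul]
    exact key _ _ _

lemma tensor_bimodule (hM : IsBimodule k H aLM aRM) (hN : IsBimodule k H aLN aRN) :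
    IsBimodule k H (tActL k H aLM aLN) (tActR k H aRM aRN) := by
  refine ⟨tensor_leftModule hM.1 hN.1, tensor_rightModule hM.2.1 hN.2.1, ?_⟩
  intro h z h'
  have key : ∀ (t t' : H ⊗[k] H) (z : M ⊗[k] N),
      actRR aRM aRN (actLL aLM aLN (t ⊗ₜ z) ⊗ₜ t')
        = actLL aLM aLN (t ⊗ₜ actRR aRM aRN (z ⊗ₜ t')) := by
    intro t t' z
    induction t using TensorProduct.induction_on with
    | zero => simp
    | add p q hp hq => simp only [TensorProduct.add_tmul, map_add, hp, hq]
    | tmul x y =>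
      induction t' using TensorProduct.induction_on with
      | zero => simp
      | add p q hp hq => simp only [TensorProduct.tmul_add, map_add, hp, hq]
      | tmul x' y' =>
        induction z using TensorProduct.induction_on with
        | zero => simp
        | add p q hp hq => simp only [TensorProduct.tmul_add, TensorProduct.add_tmul,
            map_add, hp, hq]
        | tmul m n => simp [hM.2.2 x m x', hN.2.2 y n y']
  simp only [tActL_tmul, tActR_tmul]
  exact key _ _ _

end Aux3
section Aux4
variable {k : Type*} [CommRing k] {H : Type*} [Ring H] [Bialgebra k H]
variable {M N : Type*} [AddCommGroup M] [Module k M] [AddCommGroup N] [Module k N]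
variable {cLM : M →ₗ[k] H ⊗[k] M} {cRM : M →ₗ[k] M ⊗[k] H}
variable {cLN : N →ₗ[k] H ⊗[k] N} {cRN : N →ₗ[k] N ⊗[k] H}

lemma εH_mul (x y : H) : εH k H (x * y) = εH k H x * εH k H y := by simp [εH]
lemma δH_mul (x y : H) : δH k H (x * y) = δH k H x * δH k H y := by simp [δH]

set_option maxHeartbeats 1600000 in
lemma tensor_leftComodule (hM : IsLeftComodule k H cLM) (hN : IsLeftComodule k H cLN) :
    IsLeftComodule k H (tCoactL k H cLM cLN) := by
  constructor
  · intro z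
    have key : ∀ (u : H ⊗[k] M) (v : H ⊗[k] N),
        TensorProduct.lid k (M ⊗[k] N)
            (TensorProduct.map (εH k H) LinearMap.id (cmbL (u ⊗ₜ v)))
          = (TensorProduct.lid k M (TensorProduct.map (εH k H) LinearMap.id u)) ⊗ₜ
            (TensorProduct.lid k N (TensorProduct.map (εH k H) LinearMap.id v)) := by
      intro u v
      induction u using TensorProduct.induction_on with
      | zero => simp
      | add p q hp hq => simp only [TensorProduct.add_tmul, map_add, hp, hq]
      | tmul a w =>
        induction v using TensorProduct.induction_on with
        | zero => simp
        | add p q hp hq => simp only [TensorProduct.tmul_add, map_add, hp, hq]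
        | tmul c x =>
          simp [εH_mul, TensorProduct.smul_tmul', TensorProduct.tmul_smul, smul_smul, mul_comm]
    induction z using TensorProduct.induction_on with
    | zero => simp
    | tmul m n => rw [tCoactL_tmul, key, hM.1 m, hN.1 n]
    | add p q hp hq => simp only [map_add, hp, hq]
  · intro z
    have claimL : ∀ (u : H ⊗[k] M) (v : H ⊗[k] N),
        TensorProduct.map LinearMap.id (tCoactL k H cLM cLN) (cmbL (u ⊗ₜ v))
          = TensorProduct.map (μH k H) cmbL
              (tt k H (H ⊗[k] M) H (H ⊗[k] N)
                ((TensorProduct.map LinearMap.id cLM u) ⊗ₜ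
                 (TensorProduct.map LinearMap.id cLN v))) := by
      intro u v
      induction u using TensorProduct.induction_on with
      | zero => simp
      | add p q hp hq => simp only [TensorProduct.add_tmul, map_add, hp, hq]
      | tmul a w =>
        induction v using TensorProduct.induction_on with
        | zero => simp
        | add p q hp hq => simp only [TensorProduct.tmul_add, map_add, hp, hq]
        | tmul c x => simp
    have claimR : ∀ (u : H ⊗[k] M) (v : H ⊗[k] N),
        TensorProduct.assoc k H H (M ⊗[k] N)
            (TensorProduct.map (δH k H) LinearMap.id (cmbL (u ⊗ₜ v)))
          = TensorProduct.map (μH k H) cmbL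
              (tt k H (H ⊗[k] M) H (H ⊗[k] N)
                ((TensorProduct.assoc k H H M (TensorProduct.map (δH k H) LinearMap.id u)) ⊗ₜ
                 (TensorProduct.assoc k H H N (TensorProduct.map (δH k H) LinearMap.id v)))) := by
      intro u v
      induction u using TensorProduct.induction_on with
      | zero => simp
      | add p q hp hq => simp only [TensorProduct.add_tmul, map_add, hp, hq]
      | tmul a w =>
        induction v using TensorProduct.induction_on with
        | zero => simp
        | add p q hp hq => simp only [TensorProduct.tmul_add, map_add, hp, hq]
        | tmul c x =>
          simp only [cmbL_tmul, tt_tmul, TensorProduct.map_tmul, LinearMap.id_coe, id_eq,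
            μH_tmul, δH_mul]
          generalize δH k H a = p
          generalize δH k H c = q
          induction p using TensorProduct.induction_on with
          | zero => simp
          | add p1 p2 hp1 hp2 => simp only [add_mul, mul_add, TensorProduct.tmul_add, TensorProduct.add_tmul, map_add, hp1, hp2]
          | tmul a1 a2 =>
            induction q using TensorProduct.induction_on with
            | zero => simp
            | add q1 q2 hq1 hq2 => simp only [add_mul, mul_add, TensorProduct.tmul_add, TensorProduct.add_tmul, map_add, hq1, hq2]
            | tmul c1 c2 => simp [Algebra.TensorProduct.tmul_mul_tmul]
    induction z using TensorProduct.induction_on with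
    | zero => simp
    | tmul m n => rw [tCoactL_tmul, claimL, hM.2 m, hN.2 n, claimR]
    | add p q hp hq => simp only [map_add, hp, hq]

set_option maxHeartbeats 1600000 in
set_option synthInstance.maxHeartbeats 400000 in
lemma tensor_rightComodule (hM : IsRightComodule k H cRM) (hN : IsRightComodule k H cRN) :
    IsRightComodule k H (tCoactR k H cRM cRN) := by
  constructor
  · intro z
    have key : ∀ (u : M ⊗[k] H) (v : N ⊗[k] H),
        TensorProduct.rid k (M ⊗[k] N)
            (TensorProduct.map LinearMap.id (εH k H) (cmbR (u ⊗ₜ v)))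
          = (TensorProduct.rid k M (TensorProduct.map LinearMap.id (εH k H) u)) ⊗ₜ
            (TensorProduct.rid k N (TensorProduct.map LinearMap.id (εH k H) v)) := by
      intro u v
      induction u using TensorProduct.induction_on with
      | zero => simp
      | add p q hp hq => simp only [TensorProduct.add_tmul, map_add, hp, hq]
      | tmul w b =>
        induction v using TensorProduct.induction_on with
        | zero => simp
        | add p q hp hq => simp only [TensorProduct.tmul_add, map_add, hp, hq]
        | tmul x d =>
          simp [εH_mul, TensorProduct.smul_tmul', TensorProduct.tmul_smul, smul_smul, mul_comm]
    induction z using TensorProduct.induction_on with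
    | zero => simp
    | tmul m n => rw [tCoactR_tmul, key, hM.1 m, hN.1 n]
    | add p q hp hq => simp only [map_add, hp, hq]
  · intro z
    have claimL : ∀ (u : M ⊗[k] H) (v : N ⊗[k] H),
        TensorProduct.map (tCoactR k H cRM cRN) LinearMap.id (cmbR (u ⊗ₜ v))
          = TensorProduct.map cmbR (μH k H)
              (tt k (M ⊗[k] H) H (N ⊗[k] H) H
                ((TensorProduct.map cRM LinearMap.id u) ⊗ₜ
                 (TensorProduct.map cRN LinearMap.id v))) := by
      intro u v
      induction u using TensorProduct.induction_on with
      | zero => simp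
      | add p q hp hq => simp only [TensorProduct.add_tmul, map_add, hp, hq]
      | tmul w b =>
        induction v using TensorProduct.induction_on with
        | zero => simp
        | add p q hp hq => simp only [TensorProduct.tmul_add, map_add, hp, hq]
        | tmul x d => simp
    have claimR : ∀ (u : M ⊗[k] H) (v : N ⊗[k] H),
        (TensorProduct.assoc k (M ⊗[k] N) H H).symm
            (TensorProduct.map LinearMap.id (δH k H) (cmbR (u ⊗ₜ v)))
          = TensorProduct.map cmbR (μH k H)
              (tt k (M ⊗[k] H) H (N ⊗[k] H) H
                (((TensorProduct.assoc k M H H).symm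
                    (TensorProduct.map LinearMap.id (δH k H) u)) ⊗ₜ
                 ((TensorProduct.assoc k N H H).symm
                    (TensorProduct.map LinearMap.id (δH k H) v)))) := by
      intro u v
      induction u using TensorProduct.induction_on with
      | zero => simp
      | add p q hp hq => simp only [TensorProduct.add_tmul, map_add, hp, hq]
      | tmul w b =>
        induction v using TensorProduct.induction_on with
        | zero => simp
        | add p q hp hq => simp only [TensorProduct.tmul_add, map_add, hp, hq]
        | tmul x d =>
          simp only [cmbR_tmul, tt_tmul, TensorProduct.map_tmul, LinearMap.id_coe, id_eq,
            μH_tmul, δH_mul]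
          generalize δH k H b = p
          generalize δH k H d = q
          induction p using TensorProduct.induction_on with
          | zero => simp
          | add p1 p2 hp1 hp2 => simp only [add_mul, mul_add, TensorProduct.tmul_add, TensorProduct.add_tmul, map_add, hp1, hp2]
          | tmul b1 b2 =>
            induction q using TensorProduct.induction_on with
            | zero => simp
            | add q1 q2 hq1 hq2 => simp only [add_mul, mul_add, TensorProduct.tmul_add, TensorProduct.add_tmul, map_add, hq1, hq2]
            | tmul d1 d2 => simp [Algebra.TensorProduct.tmul_mul_tmul]
    induction z using TensorProduct.induction_on with
    | zero => simp
    | tmul m n => rw [tCoactR_tmul, claimL, hM.2 m, hN.2 n, claimR]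
    | add p q hp hq => simp only [map_add, hp, hq]

set_option maxHeartbeats 1600000 in
set_option synthInstance.maxHeartbeats 400000 in
lemma tensor_bicomodule (hM : IsBicomodule k H cLM cRM) (hN : IsBicomodule k H cLN cRN) :
    IsBicomodule k H (tCoactL k H cLM cLN) (tCoactR k H cRM cRN) := by
  refine ⟨tensor_leftComodule hM.1 hN.1, tensor_rightComodule hM.2.1 hN.2.1, ?_⟩
  intro z
  have claimL : ∀ (u : H ⊗[k] M) (v : H ⊗[k] N),
      TensorProduct.map LinearMap.id (tCoactR k H cRM cRN) (cmbL (u ⊗ₜ v))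
        = TensorProduct.map (μH k H) cmbR
            (tt k H (M ⊗[k] H) H (N ⊗[k] H)
              ((TensorProduct.map LinearMap.id cRM u) ⊗ₜ
               (TensorProduct.map LinearMap.id cRN v))) := by
    intro u v
    induction u using TensorProduct.induction_on with
    | zero => simp
    | add p q hp hq => simp only [TensorProduct.add_tmul, map_add, hp, hq]
    | tmul a w =>
      induction v using TensorProduct.induction_on with
      | zero => simp
      | add p q hp hq => simp only [TensorProduct.tmul_add, map_add, hp, hq]
      | tmul c x => simp
  have claimR : ∀ (u : M ⊗[k] H) (v : N ⊗[k] H),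
      TensorProduct.assoc k H (M ⊗[k] N) H
          (TensorProduct.map (tCoactL k H cLM cLN) LinearMap.id (cmbR (u ⊗ₜ v)))
        = TensorProduct.map (μH k H) cmbR
            (tt k H (M ⊗[k] H) H (N ⊗[k] H)
              ((TensorProduct.assoc k H M H (TensorProduct.map cLM LinearMap.id u)) ⊗ₜ
               (TensorProduct.assoc k H N H (TensorProduct.map cLN LinearMap.id v)))) := by
    intro u v
    induction u using TensorProduct.induction_on with
    | zero => simp
    | add p q hp hq => simp only [TensorProduct.add_tmul, map_add, hp, hq]
    | tmul w b =>
      induction v using TensorProduct.induction_on with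
      | zero => simp
      | add p q hp hq => simp only [TensorProduct.tmul_add, map_add, hp, hq]
      | tmul x d =>
        simp only [cmbR_tmul, tt_tmul, TensorProduct.map_tmul, LinearMap.id_coe, id_eq,
          μH_tmul, tCoactL_tmul, cmbL_tmul]
        generalize cLM w = p
        generalize cLN x = q
        induction p using TensorProduct.induction_on with
        | zero => simp
        | add p1 p2 hp1 hp2 => simp only [TensorProduct.tmul_add, TensorProduct.add_tmul, map_add, hp1, hp2]
        | tmul a1 w1 =>
          induction q using TensorProduct.induction_on with
          | zero => simp
          | add q1 q2 hq1 hq2 => simp only [TensorProduct.tmul_add, TensorProduct.add_tmul, map_add, hq1, hq2]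
          | tmul c1 x1 => simp
  induction z using TensorProduct.induction_on with
  | zero => simp
  | tmul m n => rw [tCoactL_tmul, tCoactR_tmul, claimL, hM.2.2 m, hN.2.2 n, claimR]
  | add p q hp hq => simp only [map_add, hp, hq]

end Aux4
section Aux5
variable {k : Type*} [CommRing k] {H : Type*} [Ring H] [Bialgebra k H]
variable {M N : Type*} [AddCommGroup M] [Module k M] [AddCommGroup N] [Module k N]
variable {aLM : H ⊗[k] M →ₗ[k] M} {aRM : M ⊗[k] H →ₗ[k] M}
variable {cLM : M →ₗ[k] H ⊗[k] M} {cRM : M →ₗ[k] M ⊗[k] H}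
variable {aLN : H ⊗[k] N →ₗ[k] N} {aRN : N ⊗[k] H →ₗ[k] N}
variable {cLN : N →ₗ[k] H ⊗[k] N} {cRN : N →ₗ[k] N ⊗[k] H}

set_option maxHeartbeats 1600000 in
set_option synthInstance.maxHeartbeats 400000 in
lemma tensor_longLR (hM : CondLongLR k H aLM cRM) (hN : CondLongLR k H aLN cRN) :
    CondLongLR k H (tActL k H aLM aLN) (tCoactR k H cRM cRN) := by
  intro h z
  have claimA : ∀ (t : H ⊗[k] H) (m : M) (n : N),
      tCoactR k H cRM cRN (actLL aLM aLN (t ⊗ₜ (m ⊗ₜ n)))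
        = (cmbR ∘ₗ TensorProduct.map
              (TensorProduct.map aLM LinearMap.id ∘ₗ asr k H M H)
              (TensorProduct.map aLN LinearMap.id ∘ₗ asr k H N H)
            ∘ₗ tt k H H (M ⊗[k] H) (N ⊗[k] H)) (t ⊗ₜ (cRM m ⊗ₜ cRN n)) := by
    intro t m n
    induction t using TensorProduct.induction_on with
    | zero => simp
    | add p q hp hq => simp only [TensorProduct.add_tmul, map_add, hp, hq]
    | tmul x y =>
      simp only [actLL_tmul, tt_tmul, TensorProduct.map_tmul, LinearMap.coe_comp,
        Function.comp_apply, tCoactR_tmul, LinearMap.id_coe, id_eq]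
      rw [hM x m, hN y n]
      simp [asr]
  have claimB : ∀ (u : M ⊗[k] H) (v : N ⊗[k] H),
      TensorProduct.map (tActL k H aLM aLN) LinearMap.id
          ((TensorProduct.assoc k H (M ⊗[k] N) H).symm (h ⊗ₜ cmbR (u ⊗ₜ v)))
        = (cmbR ∘ₗ TensorProduct.map
              (TensorProduct.map aLM LinearMap.id ∘ₗ asr k H M H)
              (TensorProduct.map aLN LinearMap.id ∘ₗ asr k H N H)
            ∘ₗ tt k H H (M ⊗[k] H) (N ⊗[k] H)) (δH k H h ⊗ₜ (u ⊗ₜ v)) := by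
    intro u v
    induction u using TensorProduct.induction_on with
    | zero => simp
    | add p q hp hq => simp only [TensorProduct.add_tmul, TensorProduct.tmul_add, map_add, hp, hq]
    | tmul w b =>
      induction v using TensorProduct.induction_on with
      | zero => simp
      | add p q hp hq => simp only [TensorProduct.add_tmul, TensorProduct.tmul_add, map_add,
          hp, hq]
      | tmul x d =>
        simp only [cmbR_tmul, tt_tmul, TensorProduct.map_tmul, LinearMap.coe_comp,
          Function.comp_apply, LinearMap.id_coe, id_eq, μH_tmul,
          TensorProduct.assoc_symm_tmul, tActL_tmul]
        generalize δH k H h = t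
        induction t using TensorProduct.induction_on with
        | zero => simp
        | add p q hp hq => simp only [TensorProduct.add_tmul, map_add, hp, hq]
        | tmul x' y' => simp [asr]
  induction z using TensorProduct.induction_on with
  | zero => simp
  | tmul m n => rw [tActL_tmul, tCoactR_tmul, claimA, claimB]
  | add p q hp hq =>
    simp only [TensorProduct.tmul_add, map_add, hp, hq]

set_option maxHeartbeats 1600000 in
set_option synthInstance.maxHeartbeats 400000 in
lemma tensor_longRL (hM : CondLongRL k H aRM cLM) (hN : CondLongRL k H aRN cLN) :
    CondLongRL k H (tActR k H aRM aRN) (tCoactL k H cLM cLN) := by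
  intro z h
  have claimA : ∀ (t : H ⊗[k] H) (m : M) (n : N),
      tCoactL k H cLM cLN (actRR aRM aRN ((m ⊗ₜ n) ⊗ₜ t))
        = (cmbL ∘ₗ TensorProduct.map
              (TensorProduct.map LinearMap.id aRM ∘ₗ asl k H M H)
              (TensorProduct.map LinearMap.id aRN ∘ₗ asl k H N H)
            ∘ₗ tt k (H ⊗[k] M) (H ⊗[k] N) H H) ((cLM m ⊗ₜ cLN n) ⊗ₜ t) := by
    intro t m n
    induction t using TensorProduct.induction_on with
    | zero => simp
    | add p q hp hq => simp only [TensorProduct.tmul_add, map_add, hp, hq]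
    | tmul x y =>
      simp only [actRR_tmul, tt_tmul, TensorProduct.map_tmul, LinearMap.coe_comp,
        Function.comp_apply, tCoactL_tmul, LinearMap.id_coe, id_eq]
      rw [hM m x, hN n y]
      simp [asl]
  have claimB : ∀ (u : H ⊗[k] M) (v : H ⊗[k] N),
      TensorProduct.map LinearMap.id (tActR k H aRM aRN)
          (TensorProduct.assoc k H (M ⊗[k] N) H (cmbL (u ⊗ₜ v) ⊗ₜ h))
        = (cmbL ∘ₗ TensorProduct.map
              (TensorProduct.map LinearMap.id aRM ∘ₗ asl k H M H)
              (TensorProduct.map LinearMap.id aRN ∘ₗ asl k H N H)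
            ∘ₗ tt k (H ⊗[k] M) (H ⊗[k] N) H H) ((u ⊗ₜ v) ⊗ₜ δH k H h) := by
    intro u v
    induction u using TensorProduct.induction_on with
    | zero => simp
    | add p q hp hq => simp only [TensorProduct.add_tmul, TensorProduct.tmul_add, map_add, hp, hq]
    | tmul b w =>
      induction v using TensorProduct.induction_on with
      | zero => simp
      | add p q hp hq => simp only [TensorProduct.add_tmul, TensorProduct.tmul_add, map_add,
          hp, hq]
      | tmul d x =>
        simp only [cmbL_tmul, tt_tmul, TensorProduct.map_tmul, LinearMap.coe_comp,
          Function.comp_apply, LinearMap.id_coe, id_eq, μH_tmul,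
          TensorProduct.assoc_tmul, tActR_tmul]
        generalize δH k H h = t
        induction t using TensorProduct.induction_on with
        | zero => simp
        | add p q hp hq => simp only [TensorProduct.tmul_add, map_add, hp, hq]
        | tmul x' y' => simp [asl]
  induction z using TensorProduct.induction_on with
  | zero => simp
  | tmul m n => rw [tActR_tmul, tCoactL_tmul, claimA, claimB]
  | add p q hp hq =>
    simp only [TensorProduct.add_tmul, map_add, hp, hq]

end Aux5
section Aux6
variable {k : Type*} [CommRing k] {H : Type*} [Ring H] [Bialgebra k H]
variable {M N : Type*} [AddCommGroup M] [Module k M] [AddCommGroup N] [Module k N]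
variable (aLM : H ⊗[k] M →ₗ[k] M) (cLM : M →ₗ[k] H ⊗[k] M)
variable (aLN : H ⊗[k] N →ₗ[k] N) (cLN : N →ₗ[k] H ⊗[k] N)

/-- `n ↦ n⁽⁻¹⁾ ⊗ b·n⁽⁰⁾` on `b ⊗ n` -/
def rhoN : H ⊗[k] N →ₗ[k] H ⊗[k] N :=
  TensorProduct.map LinearMap.id aLN ∘ₗ asl k H H N ∘ₗ
    TensorProduct.map (sw k H H) LinearMap.id ∘ₗ asr k H H N ∘ₗ
    TensorProduct.map LinearMap.id cLN

lemma rhoN_tmul (b : H) (n : N) :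
    rhoN aLN cLN (b ⊗ₜ n)
      = TensorProduct.map LinearMap.id (aLN ∘ₗ TensorProduct.mk k H N b) (cLN n) := by
  simp only [rhoN, LinearMap.coe_comp, Function.comp_apply, TensorProduct.map_tmul,
    LinearMap.id_coe, id_eq]
  induction cLN n using TensorProduct.induction_on with
  | zero => simp
  | tmul u v => simp
  | add p q hp hq => simp [TensorProduct.tmul_add, hp, hq]

def V1 : (H ⊗[k] (H ⊗[k] H)) ⊗[k] (M ⊗[k] N) →ₗ[k] H ⊗[k] (M ⊗[k] N) :=
  cmbL ∘ₗ TensorProduct.map (cLM ∘ₗ aLM) (ydlL k H aLN cLN) ∘ₗ tt k H (H ⊗[k] H) M N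

def V1' : (H ⊗[k] (H ⊗[k] H)) ⊗[k] (M ⊗[k] N) →ₗ[k] H ⊗[k] (M ⊗[k] N) :=
  cmbL ∘ₗ TensorProduct.map (cLM ∘ₗ aLM) (ydlR k H aLN cLN) ∘ₗ tt k H (H ⊗[k] H) M N

def V2 : ((H ⊗[k] H) ⊗[k] H) ⊗[k] (M ⊗[k] N) →ₗ[k] H ⊗[k] (M ⊗[k] N) :=
  cmbL ∘ₗ TensorProduct.map (ydlL k H aLM cLM) (rhoN aLN cLN) ∘ₗ tt k (H ⊗[k] H) H M N

def V2' : ((H ⊗[k] H) ⊗[k] H) ⊗[k] (M ⊗[k] N) →ₗ[k] H ⊗[k] (M ⊗[k] N) :=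
  cmbL ∘ₗ TensorProduct.map (ydlR k H aLM cLM) (rhoN aLN cLN) ∘ₗ tt k (H ⊗[k] H) H M N

def V3 : (H ⊗[k] (H ⊗[k] H)) ⊗[k] (M ⊗[k] N) →ₗ[k] H ⊗[k] (M ⊗[k] N) :=
  TensorProduct.map (μH k H) (actLL aLM aLN) ∘ₗ tt k H (H ⊗[k] H) H (M ⊗[k] N) ∘ₗ
    TensorProduct.map LinearMap.id (tCoactL k H cLM cLN)

set_option maxHeartbeats 1600000 in
set_option synthInstance.maxHeartbeats 400000 in
lemma tensor_ydl (hM : CondYDl k H aLM cLM) (hN : CondYDl k H aLN cLN) :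
    CondYDl k H (tActL k H aLM aLN) (tCoactL k H cLM cLN) := by
  intro h z
  have claimA : ∀ (t : H ⊗[k] H) (z : M ⊗[k] N),
      ydlL k H (tActL k H aLM aLN) (tCoactL k H cLM cLN) (t ⊗ₜ z)
        = V1 aLM cLM aLN cLN ((asl k H H H (TensorProduct.map (δH k H) LinearMap.id t)) ⊗ₜ z) := by
    intro t z
    induction t using TensorProduct.induction_on with
    | zero => simp
    | add p q hp hq => simp only [map_add, TensorProduct.add_tmul, TensorProduct.tmul_add, hp, hq]
    | tmul x y =>
      rw [ydlL_tmul]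
      simp only [TensorProduct.map_tmul, LinearMap.id_coe, id_eq, tActL_tmul]
      generalize δH k H x = s
      induction s using TensorProduct.induction_on with
      | zero => simp [V1]
      | add p q hp hq => simp only [map_add, TensorProduct.add_tmul, TensorProduct.tmul_add, hp, hq]
      | tmul x1 x2 =>
        induction z using TensorProduct.induction_on with
        | zero => simp [V1]
        | add p q hp hq => simp only [map_add, TensorProduct.add_tmul, TensorProduct.tmul_add, hp, hq]
        | tmul m n =>
          simp only [V1, actLL_tmul, tt_tmul, TensorProduct.map_tmul, LinearMap.coe_comp,
            Function.comp_apply, LinearMap.id_coe, id_eq, tCoactL_tmul, cmbL_tmul,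
            asl_tmul, ydlL_tmul]
          generalize cLM (aLM (x1 ⊗ₜ m)) = P
          generalize cLN (aLN (x2 ⊗ₜ n)) = Q
          induction P using TensorProduct.induction_on with
          | zero => simp
          | add p q hp hq => simp only [map_add, TensorProduct.add_tmul, TensorProduct.tmul_add, hp, hq]
          | tmul p1 p2 =>
            induction Q using TensorProduct.induction_on with
            | zero => simp
            | add q1 q2 hq1 hq2 => simp only [map_add, TensorProduct.add_tmul, TensorProduct.tmul_add, hq1, hq2]
            | tmul u v => simp [mul_assoc]
  have claimB : ∀ (s : H ⊗[k] H) (z : M ⊗[k] N),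
      V1 aLM cLM aLN cLN ((TensorProduct.map LinearMap.id (δH k H) s) ⊗ₜ z)
        = V1' aLM cLM aLN cLN ((TensorProduct.map LinearMap.id (δH k H) s) ⊗ₜ z) := by
    intro s z
    induction s using TensorProduct.induction_on with
    | zero => simp
    | add p q hp hq => simp only [map_add, TensorProduct.add_tmul, TensorProduct.tmul_add, hp, hq]
    | tmul x y =>
      induction z using TensorProduct.induction_on with
      | zero => simp
      | add p q hp hq => simp only [map_add, TensorProduct.add_tmul, TensorProduct.tmul_add, hp, hq]
      | tmul m n =>
        simp only [V1, V1', TensorProduct.map_tmul, LinearMap.coe_comp, Function.comp_apply,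
          LinearMap.id_coe, id_eq, tt_tmul]
        rw [hN y n]
  have claimC : ∀ (w : (H ⊗[k] H) ⊗[k] H) (z : M ⊗[k] N),
      V1' aLM cLM aLN cLN ((asl k H H H w) ⊗ₜ z) = V2 aLM cLM aLN cLN (w ⊗ₜ z) := by
    intro w z
    induction w using TensorProduct.induction_on with
    | zero => simp
    | add p q hp hq => simp only [map_add, TensorProduct.add_tmul, TensorProduct.tmul_add, hp, hq]
    | tmul s y2 =>
      induction s using TensorProduct.induction_on with
      | zero => simp
      | add p q hp hq => simp only [map_add, TensorProduct.add_tmul, TensorProduct.tmul_add, hp, hq]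
      | tmul x y1 =>
        induction z using TensorProduct.induction_on with
        | zero => simp
        | add p q hp hq => simp only [map_add, TensorProduct.add_tmul, TensorProduct.tmul_add, hp, hq]
        | tmul m n =>
          simp only [V1', V2, TensorProduct.map_tmul, LinearMap.coe_comp, Function.comp_apply,
            LinearMap.id_coe, id_eq, tt_tmul, asl_tmul, cmbL_tmul, ydlR_tmul, ydlL_tmul,
            rhoN_tmul]
          generalize cLM (aLM (x ⊗ₜ m)) = P
          generalize cLN n = Q
          induction P using TensorProduct.induction_on with
          | zero => simp
          | add p q hp hq => simp only [map_add, TensorProduct.add_tmul, TensorProduct.tmul_add, hp, hq]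
          | tmul p1 p2 =>
            induction Q using TensorProduct.induction_on with
            | zero => simp
            | add q1 q2 hq1 hq2 => simp only [map_add, TensorProduct.add_tmul, TensorProduct.tmul_add, hq1, hq2]
            | tmul u v => simp [mul_assoc]
  have claimD : ∀ (s : H ⊗[k] H) (z : M ⊗[k] N),
      V2 aLM cLM aLN cLN ((TensorProduct.map (δH k H) LinearMap.id s) ⊗ₜ z)
        = V2' aLM cLM aLN cLN ((TensorProduct.map (δH k H) LinearMap.id s) ⊗ₜ z) := by
    intro s z
    induction s using TensorProduct.induction_on with
    | zero => simp
    | add p q hp hq => simp only [map_add, TensorProduct.add_tmul, TensorProduct.tmul_add, hp, hq]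
    | tmul x y =>
      induction z using TensorProduct.induction_on with
      | zero => simp
      | add p q hp hq => simp only [map_add, TensorProduct.add_tmul, TensorProduct.tmul_add, hp, hq]
      | tmul m n =>
        simp only [V2, V2', TensorProduct.map_tmul, LinearMap.coe_comp, Function.comp_apply,
          LinearMap.id_coe, id_eq, tt_tmul]
        rw [hM x m]
  have claimE : ∀ (w : (H ⊗[k] H) ⊗[k] H) (z : M ⊗[k] N),
      V2' aLM cLM aLN cLN (w ⊗ₜ z) = V3 aLM cLM aLN cLN ((asl k H H H w) ⊗ₜ z) := by
    intro w z
    induction w using TensorProduct.induction_on with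
    | zero => simp
    | add p q hp hq => simp only [map_add, TensorProduct.add_tmul, TensorProduct.tmul_add, hp, hq]
    | tmul s y2 =>
      induction s using TensorProduct.induction_on with
      | zero => simp
      | add p q hp hq => simp only [map_add, TensorProduct.add_tmul, TensorProduct.tmul_add, hp, hq]
      | tmul x y1 =>
        induction z using TensorProduct.induction_on with
        | zero => simp
        | add p q hp hq => simp only [map_add, TensorProduct.add_tmul, TensorProduct.tmul_add, hp, hq]
        | tmul m n =>
          simp only [V2', V3, TensorProduct.map_tmul, LinearMap.coe_comp, Function.comp_apply,
            LinearMap.id_coe, id_eq, tt_tmul, asl_tmul, cmbL_tmul, ydlR_tmul, rhoN_tmul,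
            tCoactL_tmul]
          generalize cLM m = P
          generalize cLN n = Q
          induction P using TensorProduct.induction_on with
          | zero => simp
          | add p q hp hq => simp only [map_add, TensorProduct.add_tmul, TensorProduct.tmul_add, hp, hq]
          | tmul p1 p2 =>
            induction Q using TensorProduct.induction_on with
            | zero => simp
            | add q1 q2 hq1 hq2 => simp only [map_add, TensorProduct.add_tmul, TensorProduct.tmul_add, hq1, hq2]
            | tmul u v => simp [mul_assoc]
  have claimF : ∀ (t : H ⊗[k] H) (z : M ⊗[k] N),
      ydlR k H (tActL k H aLM aLN) (tCoactL k H cLM cLN) (t ⊗ₜ z)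
        = V3 aLM cLM aLN cLN ((TensorProduct.map LinearMap.id (δH k H) t) ⊗ₜ z) := by
    intro t z
    induction t using TensorProduct.induction_on with
    | zero => simp
    | add p q hp hq => simp only [map_add, TensorProduct.add_tmul, TensorProduct.tmul_add, hp, hq]
    | tmul x y =>
      induction z using TensorProduct.induction_on with
      | zero => simp
      | add p q hp hq => simp only [map_add, TensorProduct.add_tmul, TensorProduct.tmul_add, hp, hq]
      | tmul m n =>
        rw [ydlR_tmul]
        simp only [V3, TensorProduct.map_tmul, LinearMap.coe_comp, Function.comp_apply,
          LinearMap.id_coe, id_eq, tt_tmul, tCoactL_tmul, cmbL_tmul]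
        generalize cLM m = P
        generalize cLN n = Q
        induction P using TensorProduct.induction_on with
        | zero => simp
        | add p q hp hq => simp only [map_add, TensorProduct.add_tmul, TensorProduct.tmul_add, hp, hq]
        | tmul p1 p2 =>
          induction Q using TensorProduct.induction_on with
          | zero => simp
          | add q1 q2 hq1 hq2 => simp only [map_add, TensorProduct.add_tmul, TensorProduct.tmul_add, hq1, hq2]
          | tmul u v => simp [mul_assoc]
  calc ydlL k H (tActL k H aLM aLN) (tCoactL k H cLM cLN) (δH k H h ⊗ₜ z)
      = V1 aLM cLM aLN cLN ((asl k H H H (TensorProduct.map (δH k H) LinearMap.id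
          (δH k H h))) ⊗ₜ z) := claimA _ _
    _ = V1 aLM cLM aLN cLN ((TensorProduct.map LinearMap.id (δH k H) (δH k H h)) ⊗ₜ z) := by
          rw [coassoc']
    _ = V1' aLM cLM aLN cLN ((TensorProduct.map LinearMap.id (δH k H) (δH k H h)) ⊗ₜ z) :=
          claimB _ _
    _ = V1' aLM cLM aLN cLN ((asl k H H H (TensorProduct.map (δH k H) LinearMap.id
          (δH k H h))) ⊗ₜ z) := by rw [coassoc']
    _ = V2 aLM cLM aLN cLN ((TensorProduct.map (δH k H) LinearMap.id (δH k H h)) ⊗ₜ z) :=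
          claimC _ _
    _ = V2' aLM cLM aLN cLN ((TensorProduct.map (δH k H) LinearMap.id (δH k H h)) ⊗ₜ z) :=
          claimD _ _
    _ = V3 aLM cLM aLN cLN ((asl k H H H (TensorProduct.map (δH k H) LinearMap.id
          (δH k H h))) ⊗ₜ z) := claimE _ _
    _ = V3 aLM cLM aLN cLN ((TensorProduct.map LinearMap.id (δH k H) (δH k H h)) ⊗ₜ z) := by
          rw [coassoc']
    _ = ydlR k H (tActL k H aLM aLN) (tCoactL k H cLM cLN) (δH k H h ⊗ₜ z) :=
          (claimF _ _).symm

end Aux6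
section Aux7
variable {k : Type*} [CommRing k] {H : Type*} [Ring H] [Bialgebra k H]
variable {M N : Type*} [AddCommGroup M] [Module k M] [AddCommGroup N] [Module k N]
variable (aRM : M ⊗[k] H →ₗ[k] M) (cRM : M →ₗ[k] M ⊗[k] H)
variable (aRN : N ⊗[k] H →ₗ[k] N) (cRN : N →ₗ[k] N ⊗[k] H)

lemma coassoc'' {h : H} :
    asr k H H H (TensorProduct.map LinearMap.id (δH k H) (δH k H h))
      = TensorProduct.map (δH k H) LinearMap.id (δH k H h) := by
  rw [← coassoc']
  simp [asl, asr]

def sigM : M ⊗[k] H →ₗ[k] M ⊗[k] H :=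
  TensorProduct.map aRM LinearMap.id ∘ₗ asr k M H H ∘ₗ
    TensorProduct.map LinearMap.id (sw k H H) ∘ₗ asl k M H H ∘ₗ
    TensorProduct.map cRM LinearMap.id

lemma sigM_tmul (m : M) (x : H) :
    sigM aRM cRM (m ⊗ₜ x)
      = TensorProduct.map (aRM ∘ₗ (TensorProduct.mk k M H).flip x) LinearMap.id (cRM m) := by
  simp only [sigM, LinearMap.coe_comp, Function.comp_apply, TensorProduct.map_tmul,
    LinearMap.id_coe, id_eq]
  induction cRM m using TensorProduct.induction_on with
  | zero => simp
  | tmul u v => simp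
  | add p q hp hq => simp [TensorProduct.add_tmul, hp, hq]

def V1r : (M ⊗[k] N) ⊗[k] ((H ⊗[k] H) ⊗[k] H) →ₗ[k] (M ⊗[k] N) ⊗[k] H :=
  cmbR ∘ₗ TensorProduct.map (ydrL k H aRM cRM) (cRN ∘ₗ aRN) ∘ₗ tt k M N (H ⊗[k] H) H

def V1r' : (M ⊗[k] N) ⊗[k] ((H ⊗[k] H) ⊗[k] H) →ₗ[k] (M ⊗[k] N) ⊗[k] H :=
  cmbR ∘ₗ TensorProduct.map (ydrR k H aRM cRM) (cRN ∘ₗ aRN) ∘ₗ tt k M N (H ⊗[k] H) H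

def V2r : (M ⊗[k] N) ⊗[k] (H ⊗[k] (H ⊗[k] H)) →ₗ[k] (M ⊗[k] N) ⊗[k] H :=
  cmbR ∘ₗ TensorProduct.map (sigM aRM cRM) (ydrL k H aRN cRN) ∘ₗ tt k M N H (H ⊗[k] H)

def V2r' : (M ⊗[k] N) ⊗[k] (H ⊗[k] (H ⊗[k] H)) →ₗ[k] (M ⊗[k] N) ⊗[k] H :=
  cmbR ∘ₗ TensorProduct.map (sigM aRM cRM) (ydrR k H aRN cRN) ∘ₗ tt k M N H (H ⊗[k] H)

def V3r : (M ⊗[k] N) ⊗[k] ((H ⊗[k] H) ⊗[k] H) →ₗ[k] (M ⊗[k] N) ⊗[k] H :=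
  TensorProduct.map (actRR aRM aRN) (μH k H) ∘ₗ tt k (M ⊗[k] N) H (H ⊗[k] H) H ∘ₗ
    TensorProduct.map (tCoactR k H cRM cRN) LinearMap.id

set_option maxHeartbeats 1600000 in
set_option synthInstance.maxHeartbeats 400000 in
lemma tensor_ydr (hM : CondYDr k H aRM cRM) (hN : CondYDr k H aRN cRN) :
    CondYDr k H (tActR k H aRM aRN) (tCoactR k H cRM cRN) := by
  intro h z
  have claimA : ∀ (t : H ⊗[k] H) (z : M ⊗[k] N),
      ydrL k H (tActR k H aRM aRN) (tCoactR k H cRM cRN) (z ⊗ₜ t)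
        = V1r aRM cRM aRN cRN
            (z ⊗ₜ (asr k H H H (TensorProduct.map LinearMap.id (δH k H) t))) := by
    intro t z
    induction t using TensorProduct.induction_on with
    | zero => simp
    | add p q hp hq => simp only [map_add, TensorProduct.add_tmul, TensorProduct.tmul_add, hp, hq]
    | tmul x y =>
      rw [ydrL_tmul]
      simp only [TensorProduct.map_tmul, LinearMap.id_coe, id_eq, tActR_tmul]
      generalize δH k H y = s
      induction s using TensorProduct.induction_on with
      | zero => simp [V1r]
      | add p q hp hq => simp only [map_add, TensorProduct.add_tmul, TensorProduct.tmul_add,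
          hp, hq]
      | tmul y1 y2 =>
        induction z using TensorProduct.induction_on with
        | zero => simp [V1r]
        | add p q hp hq => simp only [map_add, TensorProduct.add_tmul, TensorProduct.tmul_add,
            hp, hq]
        | tmul m n =>
          simp only [V1r, actRR_tmul, tt_tmul, TensorProduct.map_tmul, LinearMap.coe_comp,
            Function.comp_apply, LinearMap.id_coe, id_eq, tCoactR_tmul, cmbR_tmul,
            asr_tmul, ydrL_tmul]
          generalize cRM (aRM (m ⊗ₜ y1)) = P
          generalize cRN (aRN (n ⊗ₜ y2)) = Q
          induction P using TensorProduct.induction_on with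
          | zero => simp
          | add p q hp hq => simp only [map_add, TensorProduct.add_tmul, TensorProduct.tmul_add,
              hp, hq]
          | tmul p0 p1 =>
            induction Q using TensorProduct.induction_on with
            | zero => simp
            | add q1 q2 hq1 hq2 => simp only [map_add, TensorProduct.add_tmul,
                TensorProduct.tmul_add, hq1, hq2]
            | tmul q0 q1 => simp [mul_assoc]
  have claimB : ∀ (s : H ⊗[k] H) (z : M ⊗[k] N),
      V1r aRM cRM aRN cRN (z ⊗ₜ (TensorProduct.map (δH k H) LinearMap.id s))
        = V1r' aRM cRM aRN cRN (z ⊗ₜ (TensorProduct.map (δH k H) LinearMap.id s)) := by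
    intro s z
    induction s using TensorProduct.induction_on with
    | zero => simp
    | add p q hp hq => simp only [map_add, TensorProduct.add_tmul, TensorProduct.tmul_add,
        hp, hq]
    | tmul x y =>
      induction z using TensorProduct.induction_on with
      | zero => simp
      | add p q hp hq => simp only [map_add, TensorProduct.add_tmul, TensorProduct.tmul_add,
          hp, hq]
      | tmul m n =>
        simp only [V1r, V1r', TensorProduct.map_tmul, LinearMap.coe_comp, Function.comp_apply,
          LinearMap.id_coe, id_eq, tt_tmul]
        rw [hM x m]
  have claimC : ∀ (w : (H ⊗[k] H) ⊗[k] H) (z : M ⊗[k] N),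
      V1r' aRM cRM aRN cRN (z ⊗ₜ w) = V2r aRM cRM aRN cRN (z ⊗ₜ (asl k H H H w)) := by
    intro w z
    induction w using TensorProduct.induction_on with
    | zero => simp
    | add p q hp hq => simp only [map_add, TensorProduct.add_tmul, TensorProduct.tmul_add,
        hp, hq]
    | tmul s y2 =>
      induction s using TensorProduct.induction_on with
      | zero => simp
      | add p q hp hq => simp only [map_add, TensorProduct.add_tmul, TensorProduct.tmul_add,
          hp, hq]
      | tmul x y1 =>
        induction z using TensorProduct.induction_on with
        | zero => simp
        | add p q hp hq => simp only [map_add, TensorProduct.add_tmul, TensorProduct.tmul_add,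
            hp, hq]
        | tmul m n =>
          simp only [V1r', V2r, TensorProduct.map_tmul, LinearMap.coe_comp, Function.comp_apply,
            LinearMap.id_coe, id_eq, tt_tmul, asl_tmul, cmbR_tmul, ydrR_tmul, ydrL_tmul,
            sigM_tmul]
          generalize cRM m = P
          generalize cRN (aRN (n ⊗ₜ y2)) = Q
          induction P using TensorProduct.induction_on with
          | zero => simp
          | add p q hp hq => simp only [map_add, TensorProduct.add_tmul, TensorProduct.tmul_add,
              hp, hq]
          | tmul p0 p1 =>
            induction Q using TensorProduct.induction_on with
            | zero => simp
            | add q1 q2 hq1 hq2 => simp only [map_add, TensorProduct.add_tmul,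
                TensorProduct.tmul_add, hq1, hq2]
            | tmul q0 q1 => simp [mul_assoc]
  have claimD : ∀ (s : H ⊗[k] H) (z : M ⊗[k] N),
      V2r aRM cRM aRN cRN (z ⊗ₜ (TensorProduct.map LinearMap.id (δH k H) s))
        = V2r' aRM cRM aRN cRN (z ⊗ₜ (TensorProduct.map LinearMap.id (δH k H) s)) := by
    intro s z
    induction s using TensorProduct.induction_on with
    | zero => simp
    | add p q hp hq => simp only [map_add, TensorProduct.add_tmul, TensorProduct.tmul_add,
        hp, hq]
    | tmul x y =>
      induction z using TensorProduct.induction_on with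
      | zero => simp
      | add p q hp hq => simp only [map_add, TensorProduct.add_tmul, TensorProduct.tmul_add,
          hp, hq]
      | tmul m n =>
        simp only [V2r, V2r', TensorProduct.map_tmul, LinearMap.coe_comp, Function.comp_apply,
          LinearMap.id_coe, id_eq, tt_tmul]
        rw [hN y n]
  have claimE : ∀ (w : (H ⊗[k] H) ⊗[k] H) (z : M ⊗[k] N),
      V2r' aRM cRM aRN cRN (z ⊗ₜ (asl k H H H w)) = V3r aRM cRM aRN cRN (z ⊗ₜ w) := by
    intro w z
    induction w using TensorProduct.induction_on with
    | zero => simp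
    | add p q hp hq => simp only [map_add, TensorProduct.add_tmul, TensorProduct.tmul_add,
        hp, hq]
    | tmul s y2 =>
      induction s using TensorProduct.induction_on with
      | zero => simp
      | add p q hp hq => simp only [map_add, TensorProduct.add_tmul, TensorProduct.tmul_add,
          hp, hq]
      | tmul x y1 =>
        induction z using TensorProduct.induction_on with
        | zero => simp
        | add p q hp hq => simp only [map_add, TensorProduct.add_tmul, TensorProduct.tmul_add,
            hp, hq]
        | tmul m n =>
          simp only [V2r', V3r, TensorProduct.map_tmul, LinearMap.coe_comp, Function.comp_apply,
            LinearMap.id_coe, id_eq, tt_tmul, asl_tmul, cmbR_tmul, ydrR_tmul, sigM_tmul,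
            tCoactR_tmul]
          generalize cRM m = P
          generalize cRN n = Q
          induction P using TensorProduct.induction_on with
          | zero => simp
          | add p q hp hq => simp only [map_add, TensorProduct.add_tmul, TensorProduct.tmul_add,
              hp, hq]
          | tmul p0 p1 =>
            induction Q using TensorProduct.induction_on with
            | zero => simp
            | add q1 q2 hq1 hq2 => simp only [map_add, TensorProduct.add_tmul,
                TensorProduct.tmul_add, hq1, hq2]
            | tmul q0 q1 => simp [mul_assoc]
  have claimF : ∀ (t : H ⊗[k] H) (z : M ⊗[k] N),
      ydrR k H (tActR k H aRM aRN) (tCoactR k H cRM cRN) (z ⊗ₜ t)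
        = V3r aRM cRM aRN cRN (z ⊗ₜ (TensorProduct.map (δH k H) LinearMap.id t)) := by
    intro t z
    induction t using TensorProduct.induction_on with
    | zero => simp
    | add p q hp hq => simp only [map_add, TensorProduct.add_tmul, TensorProduct.tmul_add,
        hp, hq]
    | tmul x y =>
      induction z using TensorProduct.induction_on with
      | zero => simp
      | add p q hp hq => simp only [map_add, TensorProduct.add_tmul, TensorProduct.tmul_add,
          hp, hq]
      | tmul m n =>
        rw [ydrR_tmul]
        simp only [V3r, TensorProduct.map_tmul, LinearMap.coe_comp, Function.comp_apply,
          LinearMap.id_coe, id_eq, tt_tmul, tCoactR_tmul, cmbR_tmul]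
        generalize cRM m = P
        generalize cRN n = Q
        induction P using TensorProduct.induction_on with
        | zero => simp
        | add p q hp hq => simp only [map_add, TensorProduct.add_tmul, TensorProduct.tmul_add,
            hp, hq]
        | tmul p0 p1 =>
          induction Q using TensorProduct.induction_on with
          | zero => simp
          | add q1 q2 hq1 hq2 => simp only [map_add, TensorProduct.add_tmul,
              TensorProduct.tmul_add, hq1, hq2]
          | tmul q0 q1 => simp [mul_assoc]
  calc ydrL k H (tActR k H aRM aRN) (tCoactR k H cRM cRN) (z ⊗ₜ δH k H h)
      = V1r aRM cRM aRN cRN (z ⊗ₜ (asr k H H H (TensorProduct.map LinearMap.id (δH k H)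
          (δH k H h)))) := claimA _ _
    _ = V1r aRM cRM aRN cRN (z ⊗ₜ (TensorProduct.map (δH k H) LinearMap.id (δH k H h))) := by
          rw [coassoc'']
    _ = V1r' aRM cRM aRN cRN (z ⊗ₜ (TensorProduct.map (δH k H) LinearMap.id (δH k H h))) :=
          claimB _ _
    _ = V2r aRM cRM aRN cRN (z ⊗ₜ (asl k H H H (TensorProduct.map (δH k H) LinearMap.id
          (δH k H h)))) := claimC _ _
    _ = V2r aRM cRM aRN cRN (z ⊗ₜ (TensorProduct.map LinearMap.id (δH k H) (δH k H h))) := by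
          rw [coassoc']
    _ = V2r' aRM cRM aRN cRN (z ⊗ₜ (TensorProduct.map LinearMap.id (δH k H) (δH k H h))) :=
          claimD _ _
    _ = V2r' aRM cRM aRN cRN (z ⊗ₜ (asl k H H H (TensorProduct.map (δH k H) LinearMap.id
          (δH k H h)))) := by rw [coassoc']
    _ = V3r aRM cRM aRN cRN (z ⊗ₜ (TensorProduct.map (δH k H) LinearMap.id (δH k H h))) :=
          claimE _ _
    _ = ydrR k H (tActR k H aRM aRN) (tCoactR k H cRM cRN) (z ⊗ₜ δH k H h) :=
          (claimF _ _).symm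

end Aux7

/-- the tensor product of two objects of LR(H) is again an object of LR(H). -/
theorem lr_obj_tensor
    {k : Type*} [CommRing k] {H : Type*} [Ring H] [Bialgebra k H]
    {M N : Type*} [AddCommGroup M] [Module k M] [AddCommGroup N] [Module k N]
    (aLM : H ⊗[k] M →ₗ[k] M) (aRM : M ⊗[k] H →ₗ[k] M)
    (cLM : M →ₗ[k] H ⊗[k] M) (cRM : M →ₗ[k] M ⊗[k] H)
    (aLN : H ⊗[k] N →ₗ[k] N) (aRN : N ⊗[k] H →ₗ[k] N)
    (cLN : N →ₗ[k] H ⊗[k] N) (cRN : N →ₗ[k] N ⊗[k] H)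
    (hM : IsLRObj k H aLM aRM cLM cRM) (hN : IsLRObj k H aLN aRN cLN cRN) :
    IsLRObj k H (tActL k H aLM aLN) (tActR k H aRM aRN)
      (tCoactL k H cLM cLN) (tCoactR k H cRM cRN) := by
  obtain ⟨hMbm, hMbc, hMydl, hMlr, hMydr, hMrl⟩ := hM
  obtain ⟨hNbm, hNbc, hNydl, hNlr, hNydr, hNrl⟩ := hN
  exact ⟨tensor_bimodule hMbm hNbm, tensor_bicomodule hMbc hNbc,
    tensor_ydl aLM cLM aLN cLN hMydl hNydl, tensor_longLR hMlr hNlr,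
    tensor_ydr aRM cRM aRN cRN hMydr hNydr, tensor_longRL hMrl hNrl⟩

end LRPaper
end
end

section
/- Let H be a bialgebra and M, N objects of LR(H). The map c_{M,N}: M ⊗ N → N ⊗ M defined by c_{M,N}(m ⊗ n) = m^{(-1)}·n^{<0>} ⊗ m^{(0)}·n^{<1>} is left H-linear: c_{M,N}(h·(m ⊗ n)) = h·c_{M,N}(m ⊗ n) for all h ∈ H, m ∈ M, n ∈ N, where tensor products carry the diagonal actions. -/
open TensorProduct
noncomputable section
namespace LRPaper

set_option maxHeartbeats 1000000 in
/-- the braiding `c_{M,N}` of LR(H) is left `H`-linear. -/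
theorem braid_left_linear
    {k : Type*} [CommRing k] {H : Type*} [Ring H] [Bialgebra k H]
    {M N : Type*} [AddCommGroup M] [Module k M] [AddCommGroup N] [Module k N]
    (aLM : H ⊗[k] M →ₗ[k] M) (aRM : M ⊗[k] H →ₗ[k] M)
    (cLM : M →ₗ[k] H ⊗[k] M) (cRM : M →ₗ[k] M ⊗[k] H)
    (aLN : H ⊗[k] N →ₗ[k] N) (aRN : N ⊗[k] H →ₗ[k] N)
    (cLN : N →ₗ[k] H ⊗[k] N) (cRN : N →ₗ[k] N ⊗[k] H)
    (hM : IsLRObj k H aLM aRM cLM cRM) (hN : IsLRObj k H aLN aRN cLN cRN) :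
    ∀ (h : H) (x : M ⊗[k] N),
      braid k H cLM aRM aLN cRN (tActL k H aLM aLN (h ⊗ₜ x))
        = tActL k H aLN aLM (h ⊗ₜ braid k H cLM aRM aLN cRN x) := by

  obtain ⟨hMbi, _, hMydl, _, _, _⟩ := hM
  obtain ⟨hNbi, _, _, hNlong, _, _⟩ := hN
  have modN := hNbi.1.2
  have compatM := hMbi.2.2
  intro h x
  induction x using TensorProduct.induction_on with
  | zero => simp
  | add a b ha hb => simp only [tmul_add, map_add, ha, hb]
  | tmul m n =>
    set F : H ⊗[k] M →ₗ[k] N ⊗[k] M :=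
      TensorProduct.map aLN aRM ∘ₗ tt k H M N H
        ∘ₗ (TensorProduct.mk k (H ⊗[k] M) (N ⊗[k] H)).flip (cRN n) with hF
    have key1 : ∀ t : H ⊗[k] H,
        braid k H cLM aRM aLN cRN
            (TensorProduct.map aLM aLN (tt k H H M N (t ⊗ₜ (m ⊗ₜ n))))
          = F (ydlL k H aLM cLM (t ⊗ₜ m)) := by
      intro t
      induction t using TensorProduct.induction_on with
      | zero => simp
      | add a b ha hb => simp only [add_tmul, map_add, ha, hb]
      | tmul h1 h2 =>
        simp only [tt, braid, ydlL, sw, asl, asr, μH, hF, LinearMap.comp_apply,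
          LinearEquiv.coe_coe, TensorProduct.map_tmul,
          TensorProduct.tensorTensorTensorComm_tmul, TensorProduct.assoc_tmul,
          TensorProduct.assoc_symm_tmul, TensorProduct.comm_tmul,
          LinearMap.id_coe, id_eq]
        rw [hNlong h2 n]
        generalize cLM (aLM (h1 ⊗ₜ[k] m)) = u
        generalize cRN n = w
        induction u using TensorProduct.induction_on with
        | zero => simp
        | add a b ha hb => simp only [add_tmul, tmul_add, map_add, LinearMap.add_apply, ha, hb]
        | tmul x m' =>
          induction w using TensorProduct.induction_on with
          | zero => simp
          | add a b ha hb => simp only [add_tmul, tmul_add, map_add, LinearMap.add_apply, ha, hb]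
          | tmul n0 n1 =>
            simp only [LinearMap.comp_apply, LinearEquiv.coe_coe,
              TensorProduct.map_tmul, TensorProduct.tensorTensorTensorComm_tmul,
              TensorProduct.assoc_tmul, TensorProduct.assoc_symm_tmul,
              TensorProduct.comm_tmul, TensorProduct.mk_apply, LinearMap.flip_apply,
              LinearMap.id_coe, id_eq, LinearMap.mul'_apply, modN]
    have key3 : ∀ t : H ⊗[k] H,
        F (ydlR k H aLM cLM (t ⊗ₜ m))
          = TensorProduct.map aLN aLM
              (tt k H H N M (t ⊗ₜ braid k H cLM aRM aLN cRN (m ⊗ₜ n))) := by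
      intro t
      induction t using TensorProduct.induction_on with
      | zero => simp
      | add a b ha hb => simp only [add_tmul, map_add, ha, hb]
      | tmul h1 h2 =>
        simp only [tt, braid, ydlR, sw, asl, asr, μH, hF, LinearMap.comp_apply,
          LinearEquiv.coe_coe, TensorProduct.map_tmul,
          TensorProduct.tensorTensorTensorComm_tmul, LinearMap.id_coe, id_eq]
        generalize cLM m = v
        generalize cRN n = w
        induction v using TensorProduct.induction_on with
        | zero => simp
        | add a b ha hb => simp only [add_tmul, tmul_add, map_add, LinearMap.add_apply, ha, hb]
        | tmul x m0 =>
          induction w using TensorProduct.induction_on with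
          | zero => simp
          | add a b ha hb => simp only [add_tmul, tmul_add, map_add, LinearMap.add_apply, ha, hb]
          | tmul n0 n1 =>
            simp only [LinearMap.comp_apply, LinearEquiv.coe_coe,
              TensorProduct.map_tmul, TensorProduct.tensorTensorTensorComm_tmul,
              TensorProduct.mk_apply, LinearMap.flip_apply,
              LinearMap.id_coe, id_eq, LinearMap.mul'_apply, modN, compatM]
    simp only [tActL, LinearMap.comp_apply, TensorProduct.map_tmul,
      LinearMap.id_coe, id_eq]
    rw [key1 (δH k H h), hMydl h m, key3 (δH k H h)]


end LRPaper
end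
end

section
/- Let H be a bialgebra and M, N objects of LR(H). The map c_{M,N}(m ⊗ n) = m^{(-1)}·n^{<0>} ⊗ m^{(0)}·n^{<1>} is right H-colinear with respect to the codiagonal right coactions: ρ_{N⊗M}(c_{M,N}(m ⊗ n)) = (c_{M,N} ⊗ id_H)(ρ_{M⊗N}(m ⊗ n)) for all m ∈ M, n ∈ N. -/
open TensorProduct
noncomputable section
namespace LRPaper

section ColinearAux
variable {k : Type*} [CommRing k] {H : Type*} [Ring H] [Bialgebra k H]
variable {M N : Type*} [AddCommGroup M] [Module k M] [AddCommGroup N] [Module k N]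
variable (aLN : H ⊗[k] N →ₗ[k] N) (aRM : M ⊗[k] H →ₗ[k] M)
variable (cLM : M →ₗ[k] H ⊗[k] M) (cRM : M →ₗ[k] M ⊗[k] H) (cRN : N →ₗ[k] N ⊗[k] H)

lemma auxS1 (hLong : CondLongLR k H aLN cRN) :
    tCoactR k H cRN cRM ∘ₗ TensorProduct.map aLN aRM ∘ₗ tt k H M N H
      = (asr k N M H ∘ₗ TensorProduct.map aLN (ydrL k H aRM cRM)
          ∘ₗ tt k H M N (H ⊗[k] H))
        ∘ₗ TensorProduct.map LinearMap.id
            (asl k N H H ∘ₗ TensorProduct.map cRN LinearMap.id) := by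
  apply TensorProduct.ext'
  intro x y
  induction x using TensorProduct.induction_on with
  | zero => simp
  | add a b ha hb => rw [TensorProduct.add_tmul]; simp only [map_add, ha, hb]
  | tmul h m' =>
    induction y using TensorProduct.induction_on with
    | zero => simp
    | add a b ha hb => rw [TensorProduct.tmul_add]; simp only [map_add, ha, hb]
    | tmul n' g =>
      simp only [LinearMap.comp_apply, TensorProduct.map_tmul, tt, tCoactR, asl, asr, sw,
        LinearEquiv.coe_coe, TensorProduct.tensorTensorTensorComm_tmul, LinearMap.id_coe, id_eq]
      rw [hLong h n']
      generalize cRN n' = y1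
      induction y1 using TensorProduct.induction_on with
      | zero => simp
      | add a b ha hb =>
          simp only [TensorProduct.tmul_add, TensorProduct.add_tmul, map_add, ha, hb]
      | tmul n1 g1 =>
        simp only [LinearMap.comp_apply, TensorProduct.map_tmul, ydrL, tt, asl, asr, sw, μH,
          LinearEquiv.coe_coe, TensorProduct.tensorTensorTensorComm_tmul,
          TensorProduct.assoc_tmul, TensorProduct.assoc_symm_tmul, TensorProduct.comm_tmul,
          LinearMap.id_coe, id_eq]
        generalize cRM (aRM (m' ⊗ₜ[k] g)) = y2
        induction y2 using TensorProduct.induction_on with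
        | zero => simp
        | add a b ha hb =>
            simp only [TensorProduct.tmul_add, TensorProduct.add_tmul, map_add, ha, hb]
        | tmul m1 g2 =>
          simp [μH, TensorProduct.assoc_tmul, TensorProduct.assoc_symm_tmul,
            TensorProduct.comm_tmul, LinearMap.mul'_apply]

lemma auxYDr (hYDr : CondYDr k H aRM cRM) :
    (asr k N M H ∘ₗ TensorProduct.map aLN (ydrL k H aRM cRM) ∘ₗ tt k H M N (H ⊗[k] H))
        ∘ₗ TensorProduct.map LinearMap.id (TensorProduct.map LinearMap.id (δH k H))
      = (asr k N M H ∘ₗ TensorProduct.map aLN (ydrR k H aRM cRM) ∘ₗ tt k H M N (H ⊗[k] H))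
        ∘ₗ TensorProduct.map LinearMap.id (TensorProduct.map LinearMap.id (δH k H)) := by
  apply TensorProduct.ext'
  intro x y
  induction x using TensorProduct.induction_on with
  | zero => simp
  | add a b ha hb => rw [TensorProduct.add_tmul]; simp only [map_add, ha, hb]
  | tmul h m' =>
    induction y using TensorProduct.induction_on with
    | zero => simp
    | add a b ha hb => rw [TensorProduct.tmul_add]; simp only [map_add, ha, hb]
    | tmul n' g =>
      simp only [LinearMap.comp_apply, TensorProduct.map_tmul, tt,
        LinearEquiv.coe_coe, TensorProduct.tensorTensorTensorComm_tmul,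
        LinearMap.id_coe, id_eq]
      rw [hYDr g m']

lemma auxS3 :
    asr k N M H ∘ₗ TensorProduct.map aLN (ydrR k H aRM cRM) ∘ₗ tt k H M N (H ⊗[k] H)
      = (asr k N M H
          ∘ₗ TensorProduct.map aLN (TensorProduct.map aRM (μH k H) ∘ₗ tt k M H H H)
          ∘ₗ tt k H (M ⊗[k] H) N (H ⊗[k] H))
        ∘ₗ TensorProduct.map (TensorProduct.map LinearMap.id cRM) LinearMap.id := by
  apply TensorProduct.ext'
  intro x y
  induction x using TensorProduct.induction_on with
  | zero => simp
  | add a b ha hb => rw [TensorProduct.add_tmul]; simp only [map_add, ha, hb]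
  | tmul h m' =>
    induction y using TensorProduct.induction_on with
    | zero => simp
    | add a b ha hb => rw [TensorProduct.tmul_add]; simp only [map_add, ha, hb]
    | tmul n' g =>
      simp only [LinearMap.comp_apply, TensorProduct.map_tmul, tt, ydrR,
        LinearEquiv.coe_coe, TensorProduct.tensorTensorTensorComm_tmul,
        LinearMap.id_coe, id_eq]

lemma auxS4 :
    TensorProduct.map (braid k H cLM aRM aLN cRN) LinearMap.id
        ∘ₗ TensorProduct.map LinearMap.id (μH k H) ∘ₗ tt k M H N H
      = (asr k N M H
          ∘ₗ TensorProduct.map aLN (TensorProduct.map aRM (μH k H) ∘ₗ tt k M H H H)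
          ∘ₗ tt k H (M ⊗[k] H) N (H ⊗[k] H))
        ∘ₗ TensorProduct.map (asl k H M H ∘ₗ TensorProduct.map cLM LinearMap.id)
            (asl k N H H ∘ₗ TensorProduct.map cRN LinearMap.id) := by
  apply TensorProduct.ext'
  intro x y
  induction x using TensorProduct.induction_on with
  | zero => simp
  | add a b ha hb => rw [TensorProduct.add_tmul]; simp only [map_add, ha, hb]
  | tmul m' g' =>
    induction y using TensorProduct.induction_on with
    | zero => simp
    | add a b ha hb => rw [TensorProduct.tmul_add]; simp only [map_add, ha, hb]
    | tmul n' g =>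
      simp only [LinearMap.comp_apply, TensorProduct.map_tmul, tt, braid, asl, asr,
        LinearEquiv.coe_coe, TensorProduct.tensorTensorTensorComm_tmul,
        LinearMap.id_coe, id_eq]
      generalize cLM m' = y1
      generalize cRN n' = y2
      induction y1 using TensorProduct.induction_on with
      | zero => simp
      | add a b ha hb =>
          simp only [TensorProduct.tmul_add, TensorProduct.add_tmul, map_add, ha, hb]
      | tmul h1 m1 =>
        induction y2 using TensorProduct.induction_on with
        | zero => simp
        | add a b ha hb =>
            simp only [TensorProduct.tmul_add, TensorProduct.add_tmul, map_add, ha, hb]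
        | tmul n1 g1 =>
          simp [tt, μH, TensorProduct.assoc_tmul, TensorProduct.assoc_symm_tmul,
            TensorProduct.comm_tmul, LinearMap.mul'_apply,
            TensorProduct.tensorTensorTensorComm_tmul]
end ColinearAux

/-- the braiding `c_{M,N}` of LR(H) is right `H`-colinear. -/
theorem braid_right_colinear
    {k : Type*} [CommRing k] {H : Type*} [Ring H] [Bialgebra k H]
    {M N : Type*} [AddCommGroup M] [Module k M] [AddCommGroup N] [Module k N]
    (aLM : H ⊗[k] M →ₗ[k] M) (aRM : M ⊗[k] H →ₗ[k] M)
    (cLM : M →ₗ[k] H ⊗[k] M) (cRM : M →ₗ[k] M ⊗[k] H)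
    (aLN : H ⊗[k] N →ₗ[k] N) (aRN : N ⊗[k] H →ₗ[k] N)
    (cLN : N →ₗ[k] H ⊗[k] N) (cRN : N →ₗ[k] N ⊗[k] H)
    (hM : IsLRObj k H aLM aRM cLM cRM) (hN : IsLRObj k H aLN aRN cLN cRN) :
    ∀ x : M ⊗[k] N,
      tCoactR k H cRN cRM (braid k H cLM aRM aLN cRN x)
        = TensorProduct.map (braid k H cLM aRM aLN cRN) LinearMap.id
            (tCoactR k H cRM cRN x) := by
  have hLongN : CondLongLR k H aLN cRN := hN.2.2.2.1
  have hYDrM : CondYDr k H aRM cRM := hM.2.2.2.2.1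
  have hcoN : ∀ n : N, TensorProduct.map cRN LinearMap.id (cRN n)
      = (TensorProduct.assoc k N H H).symm
          (TensorProduct.map LinearMap.id (δH k H) (cRN n)) := hN.2.1.2.1.2
  have hbicoM := hM.2.1.2.2
  have hco' : ∀ n : N, asl k N H H (TensorProduct.map cRN LinearMap.id (cRN n))
      = TensorProduct.map LinearMap.id (δH k H) (cRN n) := by
    intro n; rw [hcoN n]; simp [asl]
  intro x
  induction x using TensorProduct.induction_on with
  | zero => simp
  | add a b ha hb => simp only [map_add, ha, hb]
  | tmul m n =>
    have e1 : tCoactR k H cRN cRM (braid k H cLM aRM aLN cRN (m ⊗ₜ n))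
        = (tCoactR k H cRN cRM ∘ₗ TensorProduct.map aLN aRM ∘ₗ tt k H M N H)
            (cLM m ⊗ₜ cRN n) := by
      simp only [braid, LinearMap.comp_apply, TensorProduct.map_tmul]
    have e5 : TensorProduct.map (braid k H cLM aRM aLN cRN) LinearMap.id
          (tCoactR k H cRM cRN (m ⊗ₜ n))
        = (TensorProduct.map (braid k H cLM aRM aLN cRN) LinearMap.id
            ∘ₗ TensorProduct.map LinearMap.id (μH k H) ∘ₗ tt k M H N H)
            (cRM m ⊗ₜ cRN n) := by
      simp only [tCoactR, LinearMap.comp_apply, TensorProduct.map_tmul]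
    rw [e1, e5, auxS1 aLN aRM cRM cRN hLongN, auxS4 aLN aRM cLM cRN]
    simp only [LinearMap.comp_apply, TensorProduct.map_tmul, LinearMap.id_coe, id_eq]
    rw [hco' n]
    have e3 := LinearMap.congr_fun (auxYDr aLN aRM cRM hYDrM) (cLM m ⊗ₜ[k] cRN n)
    simp only [LinearMap.comp_apply, TensorProduct.map_tmul, LinearMap.id_coe, id_eq] at e3
    rw [e3]
    have e4 := LinearMap.congr_fun (auxS3 aLN aRM cRM)
        (cLM m ⊗ₜ[k] TensorProduct.map LinearMap.id (δH k H) (cRN n))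
    simp only [LinearMap.comp_apply, TensorProduct.map_tmul, LinearMap.id_coe, id_eq] at e4
    rw [e4, hbicoM m]
    simp [asl]
end LRPaper
end
end
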